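/- arXiv:1111.2090 — 10 statements merged into one kernel-verified Lean document; each statement's English description precedes it below -/
import Mathlib

section
/- Let R be an associative unital ring and let M and N be right R-modules. If every M-injective right R-module is N-injective, then either N is semisimple or there exists a nonzero submodule of N belonging to σ[M]. -/
universe u

/-- `M` is `N`-injective: every homomorphism from a submodule of `N` to `M`
extends to `N`. -/
def ModInj (A : Type u) [Ring A] (M : Type u) [AddCommGroup M] [Module A M]
    (N : Type u) [AddCommGroup N] [Module A N] : Prop :=
  ∀ (K : Submodule A N) (f : K →ₗ[A] M), ∃ g : N →ₗ[A] M, ∀ x : K, g x = f x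

/-- `N ∈ σ[M]`: `N` is isomorphic to a submodule of a homomorphic image of a
direct sum of copies of `M`. -/
def MemSigma (A : Type u) [Ring A] (M : Type u) [AddCommGroup M] [Module A M]
    (N : Type u) [AddCommGroup N] [Module A N] : Prop :=
  ∃ (ι : Type u) (L : Submodule A (ι →₀ M)) (K : Submodule A ((ι →₀ M) ⧸ L)),
    Nonempty (N ≃ₗ[A] K)

/-!
If no nonzero submodule of `N` lies in `σ[M]`, then every submodule `K` of `N` is
`M`-injective for a trivial reason: the image of a map from a submodule of `M` into `K`
is a subquotient of `M`, hence in `σ[M]`, hence zero. By hypothesis `K` is then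
`N`-injective, so the identity of `K` extends to a retraction `N → K` and `K` is a direct
summand. Every submodule being complemented, `N` is semisimple.
-/

section

variable {A : Type u} [Ring A] {M X Y : Type u} [AddCommGroup M] [Module A M]
  [AddCommGroup X] [Module A X] [AddCommGroup Y] [Module A Y]

theorem MemSigma.of_linearEquiv (e : X ≃ₗ[A] Y) (hY : MemSigma A M Y) : MemSigma A M X :=
  let ⟨ι, L, K, ⟨e'⟩⟩ := hY
  ⟨ι, L, K, ⟨e.trans e'⟩⟩

theorem memSigma_submodule_quotient (L : Submodule A M) (K : Submodule A (M ⧸ L)) :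
    MemSigma A M K := by
  let e : M ≃ₗ[A] (PUnit.{u+1} →₀ M) :=
    (Finsupp.uniqueLinearEquiv A M PUnit.unit).symm
  let q : (M ⧸ L) ≃ₗ[A] ((PUnit.{u+1} →₀ M) ⧸ L.map e.toLinearMap) :=
    Submodule.Quotient.equiv L _ e rfl
  exact ⟨PUnit.{u+1}, L.map e.toLinearMap, K.map q.toLinearMap, ⟨q.submoduleMap K⟩⟩

/-- A quotient of a submodule of `M` is a submodule of a quotient of `M`. -/
theorem memSigma_range (L : Submodule A M) (f : L →ₗ[A] X) :
    MemSigma A M (LinearMap.range f) := by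
  let L₀ : Submodule A M := (LinearMap.ker f).map L.subtype
  let g : L →ₗ[A] M ⧸ L₀ := L₀.mkQ ∘ₗ L.subtype
  have hker : LinearMap.ker g = LinearMap.ker f := by
    rw [LinearMap.ker_comp, Submodule.ker_mkQ,
      Submodule.comap_map_eq_of_injective L.injective_subtype]
  exact (memSigma_submodule_quotient L₀ (LinearMap.range g)).of_linearEquiv
    (f.quotKerEquivRange.symm ≪≫ₗ Submodule.quotEquivOfEq _ _ hker.symm ≪≫ₗ
      g.quotKerEquivRange)

theorem modInj_of_forall_memSigma_eq_bot
    (hX : ∀ P : Submodule A X, MemSigma A M P → P = ⊥) : ModInj A X M := by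
  intro L f
  have hf : f = 0 := LinearMap.range_eq_bot.mp (hX _ (memSigma_range L f))
  exact ⟨0, fun x => by simp [hf]⟩

theorem Submodule.exists_isCompl_of_modInj {N : Type u} [AddCommGroup N] [Module A N]
    (K : Submodule A N) (hK : ModInj A K N) : ∃ K' : Submodule A N, IsCompl K K' := by
  obtain ⟨g, hg⟩ := hK K LinearMap.id
  exact ⟨LinearMap.ker g, LinearMap.isCompl_of_proj fun x => by simpa using hg x⟩

end

/-- if every `M`-injective right `R`-module is `N`-injective, then either `N`
is semisimple or `N` has a nonzero submodule belonging to `σ[M]`. Right `R`-modules are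
modules over `Rᵐᵒᵖ`. -/
theorem stmt_0 (R : Type u) [Ring R]
    (M N : Type u) [AddCommGroup M] [Module Rᵐᵒᵖ M] [AddCommGroup N] [Module Rᵐᵒᵖ N]
    (h : ∀ (X : Type u) [AddCommGroup X] [Module Rᵐᵒᵖ X],
      ModInj Rᵐᵒᵖ X M → ModInj Rᵐᵒᵖ X N) :
    IsSemisimpleModule Rᵐᵒᵖ N ∨
      ∃ P : Submodule Rᵐᵒᵖ N, P ≠ ⊥ ∧ MemSigma Rᵐᵒᵖ M P := by
  rw [or_iff_not_imp_right, not_exists]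
  intro hP
  refine (isSemisimpleModule_iff _ _).mpr ⟨fun K => K.exists_isCompl_of_modInj (h _ ?_)⟩
  refine modInj_of_forall_memSigma_eq_bot fun P hPσ =>
    Submodule.map_injective_of_injective K.injective_subtype ?_
  rw [Submodule.map_bot]
  by_contra hne
  exact hP _ ⟨hne, hPσ.of_linearEquiv (P.equivMapOfInjective _ K.injective_subtype).symm⟩
end

section
/- Let R be an associative unital ring and let M be a right R-module such that every semisimple right R-module belongs to σ[M]. Then for any right R-module N, the following are equivalent: (i) every M-injective right R-module is N-injective; (ii) N ∈ σ[M]. -/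
/-!
(ii) ⇒ (i): an `M`-injective module is injective relative to every direct sum of copies of `M`
(Zorn's lemma on partial linear maps), hence relative to its quotients and their submodules.

(i) ⇒ (ii): let `t` be the largest submodule of `N` lying in `σ[M]`. If `B` satisfies (i) and
`K ≤ B` with `K, B/K ∈ σ[M]`, embed `K` into an injective module `E`; the largest submodule `T`
of `E` in `σ[M]` is `M`-injective, hence `B`-injective, so `K → T` extends to `B → T`, which
together with `B → B/K` embeds `B` into `T × B/K ∈ σ[M]`. Applied to preimages of submodules
of `N/t`, this shows that `N/t` has no nonzero submodule in `σ[M]`. Then every submodule of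
`N/t` is `M`-injective, hence `N/t`-injective by (i), hence a direct summand. So `N/t` is
semisimple, lies in `σ[M]` by hypothesis, and is therefore zero.
-/

universe u

section MemSigma

variable {A : Type u} [Ring A] {M : Type u} [AddCommGroup M] [Module A M]
  {N W : Type u} [AddCommGroup N] [Module A N] [AddCommGroup W] [Module A W]

theorem memSigma_iff_exists_injective : MemSigma A M N ↔
    ∃ (ι : Type u) (L : Submodule A (ι →₀ M)) (f : N →ₗ[A] (ι →₀ M) ⧸ L),
      Function.Injective f := by
  constructor
  · rintro ⟨ι, L, K, ⟨e⟩⟩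
    exact ⟨ι, L, K.subtype ∘ₗ e.toLinearMap, K.injective_subtype.comp e.injective⟩
  · rintro ⟨ι, L, f, hf⟩
    exact ⟨ι, L, LinearMap.range f, ⟨LinearEquiv.ofInjective f hf⟩⟩

theorem MemSigma.of_injective (h : MemSigma A M W) (f : N →ₗ[A] W) (hf : Function.Injective f) :
    MemSigma A M N := by
  obtain ⟨ι, L, g, hg⟩ := memSigma_iff_exists_injective.1 h
  exact memSigma_iff_exists_injective.2 ⟨ι, L, g ∘ₗ f, hg.comp hf⟩

theorem memSigma_finsupp_quotient_quotient {ι : Type u} (L : Submodule A (ι →₀ M))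
    (X : Submodule A ((ι →₀ M) ⧸ L)) : MemSigma A M (((ι →₀ M) ⧸ L) ⧸ X) := by
  have hX : (X.comap L.mkQ).map L.mkQ = X :=
    Submodule.map_comap_eq_of_surjective L.mkQ_surjective X
  let e := Submodule.quotEquivOfEq _ _ hX.symm ≪≫ₗ
    Submodule.quotientQuotientEquivQuotient L (X.comap L.mkQ) (L.ker_mkQ.ge.trans
      (Submodule.comap_mono bot_le))
  exact memSigma_iff_exists_injective.2 ⟨ι, _, e.toLinearMap, e.injective⟩

theorem memSigma_finsupp (ι : Type u) : MemSigma A M (ι →₀ M) :=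
  (memSigma_finsupp_quotient_quotient (⊥ : Submodule A (ι →₀ M)) ⊥).of_injective
    ((⊥ : Submodule A _).mkQ ∘ₗ (⊥ : Submodule A (ι →₀ M)).mkQ) (by
      simp [← LinearMap.ker_eq_bot])

theorem memSigma_self : MemSigma A M M :=
  (memSigma_finsupp PUnit).of_injective
    (Finsupp.uniqueLinearEquiv A M PUnit.unit).symm.toLinearMap (LinearEquiv.injective _)

theorem MemSigma.of_surjective (h : MemSigma A M W) (g : W →ₗ[A] N) (hg : Function.Surjective g) :
    MemSigma A M N := by
  obtain ⟨ι, L, f, hf⟩ := memSigma_iff_exists_injective.1 h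
  let X := (LinearMap.ker g).map f
  let q := (LinearMap.ker g).mapQ X f (Submodule.le_comap_map _ _)
  have hq : Function.Injective q := by
    rw [← LinearMap.ker_eq_bot, Submodule.ker_mapQ, Submodule.comap_map_eq_of_injective hf,
      Submodule.mkQ_map_self]
  exact (memSigma_finsupp_quotient_quotient L X).of_injective
    (q ∘ₗ (g.quotKerEquivOfSurjective hg).symm.toLinearMap) (hq.comp (LinearEquiv.injective _))

theorem MemSigma.range (h : MemSigma A M W) (g : W →ₗ[A] N) :
    MemSigma A M (LinearMap.range g) :=
  h.of_surjective g.rangeRestrict g.surjective_rangeRestrict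

theorem MemSigma.dfinsupp {J : Type u} {V : J → Type u} [∀ j, AddCommGroup (V j)]
    [∀ j, Module A (V j)] (h : ∀ j, MemSigma A M (V j)) : MemSigma A M (Π₀ j, V j) := by
  classical
  choose ι L f hf using fun j => memSigma_iff_exists_injective.1 (h j)
  have hfree : MemSigma A M (Π₀ j, ι j →₀ M) :=
    (memSigma_finsupp (Σ j, ι j)).of_surjective (sigmaFinsuppLequivDFinsupp A).toLinearMap
      (LinearEquiv.surjective _)
  have hquot : MemSigma A M (Π₀ j, (ι j →₀ M) ⧸ L j) :=
    hfree.of_surjective (DFinsupp.mapRange.linearMap fun j => (L j).mkQ)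
      ((DFinsupp.mapRange_surjective _ fun _ => map_zero _).2 fun j => (L j).mkQ_surjective)
  exact hquot.of_injective (DFinsupp.mapRange.linearMap f)
    ((DFinsupp.mapRange_injective _ fun _ => map_zero _).2 hf)

end MemSigma

section SigmaTrace

variable (A : Type u) [Ring A] (M : Type u) [AddCommGroup M] [Module A M]
  (N : Type u) [AddCommGroup N] [Module A N]

def sigmaTrace : Submodule A N := sSup {P | MemSigma A M P}

variable {A M N}

theorem le_sigmaTrace {P : Submodule A N} (h : MemSigma A M P) : P ≤ sigmaTrace A M N :=
  le_sSup h

theorem memSigma_sigmaTrace : MemSigma A M (sigmaTrace A M N) := by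
  classical
  have h : sigmaTrace A M N = LinearMap.range
      (DFinsupp.lsum ℕ fun P : {P : Submodule A N // MemSigma A M P} => P.1.subtype) := by
    rw [sigmaTrace, sSup_eq_iSup', Submodule.iSup_eq_range_dfinsupp_lsum]; rfl
  rw [h]
  exact (MemSigma.dfinsupp fun P => P.2).range _

theorem memSigma_iff_sigmaTrace_eq_top : MemSigma A M N ↔ sigmaTrace A M N = ⊤ := by
  refine ⟨fun h => top_le_iff.1 (le_sigmaTrace (h.of_injective Submodule.topEquiv.toLinearMap
    (LinearEquiv.injective _))), fun h => ?_⟩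
  exact memSigma_sigmaTrace.of_injective (LinearEquiv.ofTop _ h).symm.toLinearMap
    (LinearEquiv.injective _)

theorem MemSigma.prod {W : Type u} [AddCommGroup W] [Module A W] (hN : MemSigma A M N)
    (hW : MemSigma A M W) : MemSigma A M (N × W) := by
  rw [memSigma_iff_sigmaTrace_eq_top, eq_top_iff, ← LinearMap.sup_range_inl_inr]
  exact sup_le (le_sigmaTrace (hN.range _)) (le_sigmaTrace (hW.range _))

end SigmaTrace

section ModInj

variable {A : Type u} [Ring A] {X N N' : Type u} [AddCommGroup X] [Module A X]
  [AddCommGroup N] [Module A N] [AddCommGroup N'] [Module A N']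

theorem ModInj.of_injective (h : ModInj A X N) (g : N' →ₗ[A] N) (hg : Function.Injective g) :
    ModInj A X N' := by
  intro K f
  let e := Submodule.equivMapOfInjective g hg K
  obtain ⟨k, hk⟩ := h (K.map g) (f ∘ₗ e.symm.toLinearMap)
  refine ⟨k ∘ₗ g, fun x => ?_⟩
  simpa [e] using hk (e x)

theorem ModInj.quotient (h : ModInj A X N) (P : Submodule A N) : ModInj A X (N ⧸ P) := by
  intro K f
  let r : K.comap P.mkQ →ₗ[A] K := P.mkQ.restrict fun _ hx => hx
  obtain ⟨k, hk⟩ := h (K.comap P.mkQ) (f ∘ₗ r)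
  have hPk : P ≤ LinearMap.ker k := fun x hx => by
    have hxK : x ∈ K.comap P.mkQ := by simp [(Submodule.Quotient.mk_eq_zero P).2 hx]
    have hr : r ⟨x, hxK⟩ = 0 := Subtype.ext ((Submodule.Quotient.mk_eq_zero P).2 hx)
    simpa [hr] using hk ⟨x, hxK⟩
  refine ⟨P.liftQ k hPk, fun ⟨y, hy⟩ => ?_⟩
  obtain ⟨x, rfl⟩ := P.mkQ_surjective y
  exact hk ⟨x, hy⟩

theorem ModInj.of_iSup_eq_top {J : Type*} {p : J → Submodule A N} (hp : ⨆ j, p j = ⊤)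
    (h : ∀ j, ModInj A X (p j)) : ModInj A X N := by
  intro K f
  let f₀ : N →ₗ.[A] X := ⟨K, f⟩
  obtain ⟨g, hfg, hg⟩ := zorn_le_nonempty₀ {g | f₀ ≤ g}
    (fun c hc hchain y hy => ⟨LinearPMap.sSup c hchain.directedOn,
      (hc hy).trans (LinearPMap.le_sSup _ hy), fun _ => LinearPMap.le_sSup _⟩) f₀ (le_refl f₀)
  have hdom : g.domain = ⊤ := by
    rw [eq_top_iff, ← hp]
    refine iSup_le fun j => ?_
    obtain ⟨e, he⟩ := h j (g.domain.comap (p j).subtype)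
      (g.toFun ∘ₗ (p j).subtype.restrict fun _ hx => hx)
    have hagree : ∀ (x : g.domain) (y : p j), (x : N) = y → g x = e y := by
      rintro x y hxy
      have hy : y ∈ g.domain.comap (p j).subtype := by simp [← hxy]
      rw [he ⟨y, hy⟩]
      exact congrArg g (Subtype.ext hxy)
    have hle := g.left_le_sup ⟨p j, e⟩ hagree
    exact le_sup_right.trans (hg.2 (hfg.trans hle) hle).1
  refine ⟨g.toFun ∘ₗ (LinearEquiv.ofTop _ hdom).symm.toLinearMap, fun x => ?_⟩
  exact (hfg.2 rfl).symm

theorem ModInj.finsupp {ι : Type u} (h : ModInj A X N) : ModInj A X (ι →₀ N) :=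
  ModInj.of_iSup_eq_top Finsupp.iSup_lsingle_range fun i =>
    h.of_injective (LinearEquiv.ofInjective _ (Finsupp.single_injective i)).symm.toLinearMap
      (LinearEquiv.injective _)

theorem ModInj.of_memSigma (h : ModInj A X N) (hN' : MemSigma A N N') : ModInj A X N' := by
  obtain ⟨ι, L, K, ⟨e⟩⟩ := hN'
  exact ((h.finsupp.quotient L).of_injective K.subtype K.injective_subtype).of_injective
    e.toLinearMap e.injective

theorem Submodule.exists_isCompl_of_modInj_s1 (Y : Submodule A N) (h : ModInj A Y N) :
    ∃ Y' : Submodule A N, IsCompl Y Y' := by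
  obtain ⟨g, hg⟩ := h Y LinearMap.id
  exact ⟨LinearMap.ker g, LinearMap.isCompl_of_proj hg⟩

end ModInj

section Trace

variable {A : Type u} [Ring A] {M : Type u} [AddCommGroup M] [Module A M]

theorem modInj_sigmaTrace_of_injective (E : Type u) [AddCommGroup E] [Module A E]
    [Module.Injective A E] : ModInj A (sigmaTrace A M E) M := by
  intro K f
  obtain ⟨h, hh⟩ := Module.Injective.out K.subtype K.injective_subtype
    ((sigmaTrace A M E).subtype ∘ₗ f)
  have hrange : LinearMap.range h ≤ sigmaTrace A M E := le_sigmaTrace (memSigma_self.range h)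
  exact ⟨h.codRestrict _ fun m => hrange ⟨m, rfl⟩, fun x => Subtype.ext (hh x)⟩

theorem modInj_of_sigmaTrace_eq_bot {W : Type u} [AddCommGroup W] [Module A W]
    (hW : sigmaTrace A M W = ⊥) (Y : Submodule A W) : ModInj A Y M := by
  intro K f
  have hf : Y.subtype ∘ₗ f = 0 := LinearMap.range_eq_bot.1 <| le_bot_iff.1 <| hW ▸
    le_sigmaTrace ((memSigma_self.of_injective K.subtype K.injective_subtype).range _)
  exact ⟨0, fun x => Subtype.ext (LinearMap.congr_fun hf x).symm⟩

theorem Module.exists_injective_into_injective (B : Type u) [AddCommGroup B] [Module A B] :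
    ∃ (E : Type u) (_ : AddCommGroup E) (_ : Module A E),
      Module.Injective A E ∧ ∃ φ : B →ₗ[A] E, Function.Injective φ := by
  let J := CategoryTheory.Injective.under (ModuleCat.of A B)
  have : CategoryTheory.Injective (ModuleCat.of A J) := inferInstanceAs (CategoryTheory.Injective J)
  exact ⟨J, inferInstance, inferInstance, Module.injective_module_of_injective_object A J,
    (CategoryTheory.Injective.ι (ModuleCat.of A B)).hom,
    (ModuleCat.mono_iff_injective _).1 inferInstance⟩

theorem MemSigma.of_ker {B C : Type u} [AddCommGroup B] [Module A B] [AddCommGroup C]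
    [Module A C]
    (hB : ∀ (X : Type u) [AddCommGroup X] [Module A X], ModInj A X M → ModInj A X B)
    (φ : B →ₗ[A] C) (hC : MemSigma A M C) (hK : MemSigma A M (LinearMap.ker φ)) :
    MemSigma A M B := by
  obtain ⟨E, _, _, _, ι, hι⟩ :=
    Module.exists_injective_into_injective (A := A) (LinearMap.ker φ)
  let T := sigmaTrace A M E
  have hιT : LinearMap.range ι ≤ T := le_sigmaTrace (hK.range ι)
  obtain ⟨g, hg⟩ := hB T (modInj_sigmaTrace_of_injective E) (LinearMap.ker φ)
    (ι.codRestrict T fun k => hιT ⟨k, rfl⟩)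
  refine (memSigma_sigmaTrace.prod hC).of_injective (g.prod φ) ?_
  rw [← LinearMap.ker_eq_bot, LinearMap.ker_prod, eq_bot_iff]
  rintro b ⟨hgb, hφb⟩
  have hιb : ι ⟨b, hφb⟩ = ι 0 := by
    rw [map_zero]
    exact congrArg Subtype.val ((hg ⟨b, hφb⟩).symm.trans hgb)
  simpa using congrArg Subtype.val (hι hιb)

theorem sigmaTrace_quotient_sigmaTrace_eq_bot {N : Type u} [AddCommGroup N] [Module A N]
    (hN : ∀ (X : Type u) [AddCommGroup X] [Module A X], ModInj A X M → ModInj A X N) :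
    sigmaTrace A M (N ⧸ sigmaTrace A M N) = ⊥ := by
  set t := sigmaTrace A M N
  set P := sigmaTrace A M (N ⧸ t)
  let Y := P.comap t.mkQ
  let φ : Y →ₗ[A] P := (t.mkQ.domRestrict Y).codRestrict P fun y => y.2
  have hker : ∀ k : LinearMap.ker φ, (k : N) ∈ t := fun k =>
    (Submodule.Quotient.mk_eq_zero t).1 (congrArg Subtype.val k.2)
  have hK : MemSigma A M (LinearMap.ker φ) :=
    memSigma_sigmaTrace.of_injective
      ((Y.subtype ∘ₗ (LinearMap.ker φ).subtype).codRestrict t hker) fun _ _ hab =>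
        (Y.injective_subtype.comp (LinearMap.ker φ).injective_subtype) (congrArg Subtype.val hab :)
  have hY : MemSigma A M Y := MemSigma.of_ker
    (fun X _ _ hX => (hN X hX).of_injective Y.subtype Y.injective_subtype) φ memSigma_sigmaTrace hK
  rw [eq_bot_iff]
  intro q hq
  obtain ⟨n, rfl⟩ := t.mkQ_surjective q
  exact (Submodule.Quotient.mk_eq_zero t).2 (le_sigmaTrace hY hq)

theorem isSemisimpleModule_quotient_sigmaTrace {N : Type u} [AddCommGroup N] [Module A N]
    (hN : ∀ (X : Type u) [AddCommGroup X] [Module A X], ModInj A X M → ModInj A X N) :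
    IsSemisimpleModule A (N ⧸ sigmaTrace A M N) where
  exists_isCompl Y := Y.exists_isCompl_of_modInj_s1 <|
    (hN Y (modInj_of_sigmaTrace_eq_bot (sigmaTrace_quotient_sigmaTrace_eq_bot hN) Y)).quotient _

end Trace

/-- if every semisimple right `R`-module belongs to `σ[M]`, then for any
right `R`-module `N`, every `M`-injective module is `N`-injective iff `N ∈ σ[M]`. -/
theorem stmt_1 (R : Type u) [Ring R]
    (M : Type u) [AddCommGroup M] [Module Rᵐᵒᵖ M]
    (hss : ∀ (S : Type u) [AddCommGroup S] [Module Rᵐᵒᵖ S],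
      IsSemisimpleModule Rᵐᵒᵖ S → MemSigma Rᵐᵒᵖ M S)
    (N : Type u) [AddCommGroup N] [Module Rᵐᵒᵖ N] :
    (∀ (X : Type u) [AddCommGroup X] [Module Rᵐᵒᵖ X],
      ModInj Rᵐᵒᵖ X M → ModInj Rᵐᵒᵖ X N) ↔ MemSigma Rᵐᵒᵖ M N := by
  refine ⟨fun hN => ?_, fun hN X _ _ hX => hX.of_memSigma hN⟩
  have hQ := memSigma_iff_sigmaTrace_eq_top.1 (hss _ (isSemisimpleModule_quotient_sigmaTrace hN))
  rw [sigmaTrace_quotient_sigmaTrace_eq_bot hN, subsingleton_iff_bot_eq_top,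
    Submodule.subsingleton_iff, Submodule.Quotient.subsingleton_iff] at hQ
  exact memSigma_iff_sigmaTrace_eq_top.2 hQ
end

section
/- Let R be an associative unital ring and let N be a right R-module such that every semisimple right R-module belongs to σ[N]. Then there exists a right R-module M such that for every right R-module K, M is K-injective if and only if K ∈ σ[N]. (In other words, every Wisbauer class containing all semisimple modules is the injectivity domain of some module.) -/
/-!
A class `𝒞` of modules closed under submodules, quotients and direct sums, such as `σ[N]`, that
contains the simple modules is the injectivity domain of `M = (∏ V) × ∏_J tr_𝒞 E(R/J)`. Here `V`
runs over the `𝒞`-torsionfree submodules of the cyclic modules `R/J`, `E(R/J)` is an injective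
module containing `R/J`, and `tr_𝒞` is the largest submodule lying in `𝒞`. For `K ∈ 𝒞` every map
from a submodule of `K` to `V` is zero, and every map to `E(R/J)` lands in the trace, so `M` is
`K`-injective.

Conversely, a `𝒞`-torsionfree module `C` with `M` `C`-injective is zero: for `0 ≠ c ∈ C` write
`cR ≅ R/J` and pick a maximal `m ⊇ J`; then `V = m/J` would be a direct summand of `R/J` with
complement `R/m ∈ 𝒞`. If `M` is `R/J`-injective, extending `tr_𝒞(R/J) → tr_𝒞 E(R/J)` gives a
map `R/J → tr_𝒞 E(R/J)` whose kernel is `𝒞`-torsionfree, hence zero, so `R/J ∈ 𝒞`. Thus, when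
`M` is `K`-injective, every cyclic submodule of `K`, and hence `K`, lies in `𝒞`.
-/

universe u

open Function

section ModInj

variable {A : Type u} [Ring A] {M K : Type u} [AddCommGroup M] [Module A M]
  [AddCommGroup K] [Module A K]

theorem ModInj.of_injective_s2 {K' : Type u} [AddCommGroup K'] [Module A K'] (h : ModInj A M K)
    (i : K' →ₗ[A] K) (hi : Injective i) : ModInj A M K' := by
  intro Y f
  let e := Submodule.equivMapOfInjective i hi Y
  obtain ⟨g, hg⟩ := h (Y.map i) (f ∘ₗ e.symm.toLinearMap)
  exact ⟨g ∘ₗ i, fun y => by simpa [e, Submodule.coe_equivMapOfInjective_apply] using hg (e y)⟩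

theorem ModInj.of_moduleInjective [Module.Injective A M] : ModInj A M K := fun Y f =>
  (Module.Injective.out Y.subtype Y.injective_subtype f).imp fun _ h y => h y

theorem modInj_pi_iff {ι : Type u} {W : ι → Type u} [∀ i, AddCommGroup (W i)]
    [∀ i, Module A (W i)] : ModInj A (Π i, W i) K ↔ ∀ i, ModInj A (W i) K := by
  classical
  refine ⟨fun h i Y f => ?_, fun h Y f => ?_⟩
  · obtain ⟨g, hg⟩ := h Y (LinearMap.single A W i ∘ₗ f)
    exact ⟨LinearMap.proj i ∘ₗ g, fun y => by simpa using congr_fun (hg y) i⟩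
  · choose g hg using fun i => h i Y (LinearMap.proj i ∘ₗ f)
    exact ⟨LinearMap.pi g, fun y => funext fun i => hg i y⟩

theorem modInj_prod_iff {M₁ M₂ : Type u} [AddCommGroup M₁] [Module A M₁] [AddCommGroup M₂]
    [Module A M₂] : ModInj A (M₁ × M₂) K ↔ ModInj A M₁ K ∧ ModInj A M₂ K := by
  refine ⟨fun h => ⟨fun Y f => ?_, fun Y f => ?_⟩, fun ⟨h₁, h₂⟩ Y f => ?_⟩
  · obtain ⟨g, hg⟩ := h Y (LinearMap.inl A M₁ M₂ ∘ₗ f)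
    exact ⟨LinearMap.fst A M₁ M₂ ∘ₗ g, fun y => by simpa using congr_arg Prod.fst (hg y)⟩
  · obtain ⟨g, hg⟩ := h Y (LinearMap.inr A M₁ M₂ ∘ₗ f)
    exact ⟨LinearMap.snd A M₁ M₂ ∘ₗ g, fun y => by simpa using congr_arg Prod.snd (hg y)⟩
  · obtain ⟨g₁, hg₁⟩ := h₁ Y (LinearMap.fst A M₁ M₂ ∘ₗ f)
    obtain ⟨g₂, hg₂⟩ := h₂ Y (LinearMap.snd A M₁ M₂ ∘ₗ f)
    exact ⟨g₁.prod g₂, fun y => Prod.ext (hg₁ y) (hg₂ y)⟩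

end ModInj

structure IsWisbauerClass {A : Type u} [Ring A]
    (𝒞 : ∀ (X : Type u) [AddCommGroup X] [Module A X], Prop) : Prop where
  of_injective_s2 {X Y : Type u} [AddCommGroup X] [Module A X] [AddCommGroup Y] [Module A Y]
    (f : X →ₗ[A] Y) (hf : Injective f) : 𝒞 Y → 𝒞 X
  of_surjective {X Y : Type u} [AddCommGroup X] [Module A X] [AddCommGroup Y] [Module A Y]
    (f : X →ₗ[A] Y) (hf : Surjective f) : 𝒞 X → 𝒞 Y
  dfinsupp {ι : Type u} (D : ι → Type u) [∀ i, AddCommGroup (D i)] [∀ i, Module A (D i)] :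
    (∀ i, 𝒞 (D i)) → 𝒞 (Π₀ i, D i)

section WisbauerClass

variable {A : Type u} [Ring A] {𝒞 : ∀ (X : Type u) [AddCommGroup X] [Module A X], Prop}
  {X Y : Type u} [AddCommGroup X] [Module A X] [AddCommGroup Y] [Module A Y]

theorem IsWisbauerClass.map (h𝒞 : IsWisbauerClass 𝒞) {D : Submodule A X} (hD : 𝒞 D)
    (f : X →ₗ[A] Y) (hf : Injective f) : 𝒞 (D.map f) :=
  h𝒞.of_injective_s2 (Submodule.equivMapOfInjective f hf D).symm.toLinearMap
    (LinearEquiv.injective _) hD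

theorem IsWisbauerClass.range (h𝒞 : IsWisbauerClass 𝒞) (hX : 𝒞 X) (f : X →ₗ[A] Y) :
    𝒞 (LinearMap.range f) :=
  h𝒞.of_surjective f.rangeRestrict f.surjective_rangeRestrict hX

theorem IsWisbauerClass.iSup (h𝒞 : IsWisbauerClass 𝒞) {ι : Type u} (D : ι → Submodule A X)
    (hD : ∀ i, 𝒞 (D i)) : 𝒞 ↥(⨆ i, D i) := by
  classical
  rw [Submodule.iSup_eq_range_dfinsupp_lsum]
  exact h𝒞.range (h𝒞.dfinsupp _ hD) _

variable (𝒞) in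
def traceSubmodule (X : Type u) [AddCommGroup X] [Module A X] : Submodule A X :=
  ⨆ D : {D : Submodule A X // 𝒞 D}, D.1

theorem le_traceSubmodule {D : Submodule A X} (hD : 𝒞 D) : D ≤ traceSubmodule 𝒞 X :=
  le_iSup (fun D : {D : Submodule A X // 𝒞 D} => D.1) ⟨D, hD⟩

theorem IsWisbauerClass.traceSubmodule (h𝒞 : IsWisbauerClass 𝒞) : 𝒞 (traceSubmodule 𝒞 X) :=
  h𝒞.iSup _ fun D => D.2

variable (𝒞) in
def IsTorsionfree (X : Type u) [AddCommGroup X] [Module A X] : Prop :=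
  ∀ D : Submodule A X, 𝒞 D → D = ⊥

theorem IsTorsionfree.of_injective_s2 (h𝒞 : IsWisbauerClass 𝒞) (h : IsTorsionfree 𝒞 Y)
    (f : X →ₗ[A] Y) (hf : Injective f) : IsTorsionfree 𝒞 X := fun _ hD =>
  Submodule.map_injective_of_injective hf ((h _ (h𝒞.map hD f hf)).trans (Submodule.map_bot f).symm)

theorem IsTorsionfree.eq_zero (h𝒞 : IsWisbauerClass 𝒞) (h : IsTorsionfree 𝒞 Y) (hX : 𝒞 X)
    (f : X →ₗ[A] Y) : f = 0 :=
  LinearMap.range_eq_bot.1 (h _ (h𝒞.range hX f))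

theorem IsTorsionfree.modInj (h𝒞 : IsWisbauerClass 𝒞) (h : IsTorsionfree 𝒞 Y) (hX : 𝒞 X) :
    ModInj A Y X := fun Z f =>
  ⟨0, fun z => by
    rw [h.eq_zero h𝒞 (h𝒞.of_injective_s2 Z.subtype Z.injective_subtype hX) f]
    rfl⟩

theorem modInj_traceSubmodule (h𝒞 : IsWisbauerClass 𝒞) [Module.Injective A Y] (hX : 𝒞 X) :
    ModInj A (traceSubmodule 𝒞 Y) X := by
  intro Z f
  obtain ⟨g, hg⟩ := (ModInj.of_moduleInjective : ModInj A Y X) Z ((traceSubmodule 𝒞 Y).subtype ∘ₗ f)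
  have hle : LinearMap.range g ≤ traceSubmodule 𝒞 Y := le_traceSubmodule (h𝒞.range hX g)
  exact ⟨g.codRestrict _ fun x => hle ⟨x, rfl⟩, fun z => Subtype.ext (hg z)⟩

/-- A retraction onto `V` splits off `X ⧸ V` as a submodule of `X`. -/
theorem IsTorsionfree.eq_top_of_modInj (h𝒞 : IsWisbauerClass 𝒞) (h : IsTorsionfree 𝒞 X)
    {V : Submodule A X} (hXV : 𝒞 (X ⧸ V)) (hV : ModInj A V X) : V = ⊤ := by
  obtain ⟨p, hp⟩ := hV V LinearMap.id
  have hc : IsCompl V (LinearMap.ker p) := LinearMap.isCompl_of_proj hp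
  have hker : LinearMap.ker p = ⊥ := h _ <| h𝒞.of_injective_s2
    (Submodule.quotientEquivOfIsCompl V _ hc).symm.toLinearMap (LinearEquiv.injective _) hXV
  exact eq_top_of_isCompl_bot (hker ▸ hc)

/-- The trace of `X` is sent into the trace of `Y`, and an extension of that map to `X` is
injective on the trace of `X`, which contains every submodule of `X` lying in `𝒞`. -/
theorem exists_isTorsionfree_ker_of_modInj (h𝒞 : IsWisbauerClass 𝒞) (ε : X →ₗ[A] Y)
    (hε : Injective ε) (h : ModInj A (traceSubmodule 𝒞 Y) X) :
    ∃ g : X →ₗ[A] traceSubmodule 𝒞 Y, IsTorsionfree 𝒞 (LinearMap.ker g) := by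
  set T := traceSubmodule 𝒞 X
  have hT : T.map ε ≤ traceSubmodule 𝒞 Y := le_traceSubmodule (h𝒞.map h𝒞.traceSubmodule ε hε)
  obtain ⟨g, hg⟩ := h T ((ε ∘ₗ T.subtype).codRestrict _ fun t => hT ⟨t, t.2, rfl⟩)
  refine ⟨g, fun D hD => eq_bot_iff.2 fun d hd => ?_⟩
  have hdT : (d : X) ∈ T :=
    le_traceSubmodule (h𝒞.map hD _ (LinearMap.ker g).injective_subtype) ⟨d, hd, rfl⟩
  have hεd : ε d = 0 := by
    have := congr_arg Subtype.val (hg ⟨d, hdT⟩)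
    rw [LinearMap.mem_ker.1 d.2] at this
    exact this.symm
  exact (Submodule.mem_bot A).2 (Subtype.ext (hε (hεd.trans (map_zero ε).symm)))

end WisbauerClass

section InjectivityDomain

variable {A : Type u} [Ring A] {𝒞 : ∀ (X : Type u) [AddCommGroup X] [Module A X], Prop}

instance (X : ModuleCat.{u} A) :
    Module.Injective A (CategoryTheory.Injective.under X : ModuleCat.{u} A) :=
  Module.injective_module_of_injective_object A _
    (inj := CategoryTheory.Injective.injective_under X)

variable (𝒞) in
abbrev TorsionfreeProduct : Type u :=
  Π q : {p : Σ J : Submodule A A, Submodule A (A ⧸ J) // IsTorsionfree 𝒞 p.2}, (q.1.2 : Type u)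

variable (𝒞) in
abbrev TraceProduct : Type u :=
  Π J : Submodule A A, traceSubmodule 𝒞
    (CategoryTheory.Injective.under (ModuleCat.of A (A ⧸ J)) : ModuleCat.{u} A)

theorem modInj_of_mem (h𝒞 : IsWisbauerClass 𝒞) {K : Type u} [AddCommGroup K] [Module A K]
    (hK : 𝒞 K) : ModInj A (TorsionfreeProduct 𝒞 × TraceProduct 𝒞) K :=
  modInj_prod_iff.2 ⟨modInj_pi_iff.2 fun q => q.2.modInj h𝒞 hK,
    modInj_pi_iff.2 fun _ => modInj_traceSubmodule h𝒞 hK⟩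

theorem IsTorsionfree.subsingleton_of_modInj (h𝒞 : IsWisbauerClass 𝒞)
    (hsimple : ∀ (S : Type u) [AddCommGroup S] [Module A S] [IsSimpleModule A S], 𝒞 S)
    {C : Type u} [AddCommGroup C] [Module A C] (hC : IsTorsionfree 𝒞 C)
    (hM : ModInj A (TorsionfreeProduct 𝒞) C) : Subsingleton C := by
  refine subsingleton_of_forall_eq 0 fun c => ?_
  by_contra hc
  set J : Submodule A A := Ideal.torsionOf A C c
  let ι : (A ⧸ J) →ₗ[A] C :=
    (A ∙ c).subtype ∘ₗ (Ideal.quotTorsionOfEquivSpanSingleton A C c).toLinearMap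
  have hι : Injective ι := (A ∙ c).injective_subtype.comp (LinearEquiv.injective _)
  have hJ : IsTorsionfree 𝒞 (A ⧸ J) := hC.of_injective_s2 h𝒞 ι hι
  obtain ⟨m, hm, hJm⟩ := Ideal.exists_le_maximal J ((Ideal.torsionOf_eq_top_iff A c).not.2 hc)
  set V := Submodule.map J.mkQ m
  have hV : IsTorsionfree 𝒞 V := hJ.of_injective_s2 h𝒞 V.subtype V.injective_subtype
  have : IsSimpleModule A (A ⧸ m) := isSimpleModule_iff_isCoatom.mpr (Ideal.isMaximal_def.mp hm)
  have hVtop : V = ⊤ := hJ.eq_top_of_modInj h𝒞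
    (h𝒞.of_injective_s2 (Submodule.quotientQuotientEquivQuotient J m hJm).toLinearMap
      (LinearEquiv.injective _) (hsimple _))
    (modInj_pi_iff.1 (hM.of_injective_s2 ι hι) ⟨⟨J, V⟩, hV⟩)
  have hmtop := congr_arg (Submodule.comap J.mkQ) hVtop
  rw [Submodule.comap_map_mkQ, sup_eq_right.2 hJm, Submodule.comap_top] at hmtop
  exact hm.ne_top hmtop

theorem mem_of_modInj_quotient (h𝒞 : IsWisbauerClass 𝒞)
    (hsimple : ∀ (S : Type u) [AddCommGroup S] [Module A S] [IsSimpleModule A S], 𝒞 S)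
    (J : Submodule A A) (hM : ModInj A (TorsionfreeProduct 𝒞 × TraceProduct 𝒞) (A ⧸ J)) :
    𝒞 (A ⧸ J) := by
  obtain ⟨hM₁, hM₂⟩ := modInj_prod_iff.1 hM
  obtain ⟨g, hg⟩ := exists_isTorsionfree_ker_of_modInj h𝒞
    (CategoryTheory.Injective.ι (ModuleCat.of A (A ⧸ J))).hom
    ((ModuleCat.mono_iff_injective _).1 inferInstance) (modInj_pi_iff.1 hM₂ J)
  have : Subsingleton (LinearMap.ker g) :=
    hg.subsingleton_of_modInj h𝒞 hsimple (hM₁.of_injective_s2 _ (LinearMap.ker g).injective_subtype)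
  exact h𝒞.of_injective_s2 g (LinearMap.ker_eq_bot.1 (Submodule.eq_bot_of_subsingleton))
    h𝒞.traceSubmodule

theorem IsWisbauerClass.exists_modInj_iff (h𝒞 : IsWisbauerClass 𝒞)
    (hsimple : ∀ (S : Type u) [AddCommGroup S] [Module A S] [IsSimpleModule A S], 𝒞 S) :
    ∃ M : ModuleCat.{u} A, ∀ (K : Type u) [AddCommGroup K] [Module A K], ModInj A M K ↔ 𝒞 K := by
  refine ⟨ModuleCat.of A (TorsionfreeProduct 𝒞 × TraceProduct 𝒞),
    fun K _ _ => ⟨fun hM => ?_, modInj_of_mem h𝒞⟩⟩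
  have hcyclic (x : K) : 𝒞 (A ∙ x) := by
    let e := Ideal.quotTorsionOfEquivSpanSingleton A K x
    refine h𝒞.of_injective_s2 e.symm.toLinearMap e.symm.injective
      (mem_of_modInj_quotient h𝒞 hsimple _ ?_)
    exact hM.of_injective_s2 ((A ∙ x).subtype ∘ₗ e.toLinearMap)
      ((A ∙ x).injective_subtype.comp e.injective)
  have htop : (⨆ x : K, A ∙ x) = ⊤ :=
    eq_top_iff.2 fun x _ => Submodule.mem_iSup_of_mem x (Submodule.mem_span_singleton_self x)
  exact h𝒞.of_injective_s2 Submodule.topEquiv.symm.toLinearMap (LinearEquiv.injective _)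
    (htop ▸ h𝒞.iSup _ hcyclic)

end InjectivityDomain

section Subgenerated

variable {A : Type u} [Ring A] {N : Type u} [AddCommGroup N] [Module A N]
  {X Y : Type u} [AddCommGroup X] [Module A X] [AddCommGroup Y] [Module A Y]

variable (A N) in
def IsSubquotientOfSum (X : Type u) [AddCommGroup X] [Module A X] : Prop :=
  ∃ (ι : Type u) (P : Submodule A (ι →₀ N)) (f : P →ₗ[A] X), Surjective f

theorem IsSubquotientOfSum.of_surjective (h : IsSubquotientOfSum A N X) (f : X →ₗ[A] Y)
    (hf : Surjective f) : IsSubquotientOfSum A N Y :=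
  let ⟨ι, P, g, hg⟩ := h
  ⟨ι, P, f ∘ₗ g, hf.comp hg⟩

theorem IsSubquotientOfSum.of_injective_s2 (h : IsSubquotientOfSum A N Y) (f : X →ₗ[A] Y)
    (hf : Injective f) : IsSubquotientOfSum A N X := by
  obtain ⟨ι, P, g, hg⟩ := h
  let q : Submodule A P := (LinearMap.range f).comap g
  let g' : q →ₗ[A] LinearMap.range f := (g ∘ₗ q.subtype).codRestrict _ fun p => p.2
  have hg' : Surjective g' := by
    rintro ⟨_, x, rfl⟩
    obtain ⟨p, hp⟩ := hg (f x)
    exact ⟨⟨p, x, hp.symm⟩, Subtype.ext hp⟩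
  let e := Submodule.equivMapOfInjective P.subtype P.injective_subtype q
  exact ⟨ι, q.map P.subtype,
    (LinearEquiv.ofInjective f hf).symm.toLinearMap ∘ₗ g' ∘ₗ e.symm.toLinearMap,
    (LinearEquiv.ofInjective f hf).symm.surjective.comp (hg'.comp e.symm.surjective)⟩

theorem isSubquotientOfSum_finsupp (ι : Type u) : IsSubquotientOfSum A N (ι →₀ N) :=
  ⟨ι, ⊤, Submodule.topEquiv.toLinearMap, Submodule.topEquiv.surjective⟩

theorem IsSubquotientOfSum.dfinsupp {ι : Type u} (D : ι → Type u) [∀ i, AddCommGroup (D i)]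
    [∀ i, Module A (D i)] (h : ∀ i, IsSubquotientOfSum A N (D i)) :
    IsSubquotientOfSum A N (Π₀ i, D i) := by
  choose κ P f hf using h
  have hP : IsSubquotientOfSum A N (Π₀ i, P i) :=
    ((isSubquotientOfSum_finsupp (Σ i, κ i)).of_injective_s2
      (sigmaFinsuppLequivDFinsupp A).symm.toLinearMap (LinearEquiv.injective _)).of_injective_s2
      (DFinsupp.mapRange.linearMap fun i => (P i).subtype)
      ((DFinsupp.mapRange_injective _ fun _ => map_zero _).2 fun i => (P i).injective_subtype)
  exact hP.of_surjective (DFinsupp.mapRange.linearMap f)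
    ((DFinsupp.mapRange_surjective _ fun _ => map_zero _).2 hf)

theorem memSigma_iff_isSubquotientOfSum : MemSigma A N X ↔ IsSubquotientOfSum A N X := by
  constructor
  · rintro ⟨ι, L, K, ⟨e⟩⟩
    refine IsSubquotientOfSum.of_injective_s2 ?_ e.toLinearMap e.injective
    refine ⟨ι, K.comap L.mkQ, (L.mkQ ∘ₗ (K.comap L.mkQ).subtype).codRestrict K fun p => p.2, ?_⟩
    rintro ⟨y, hy⟩
    obtain ⟨v, rfl⟩ := L.mkQ_surjective y
    exact ⟨⟨v, hy⟩, rfl⟩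
  · rintro ⟨ι, P, f, hf⟩
    set L := (LinearMap.ker f).map P.subtype
    set φ := L.mkQ ∘ₗ P.subtype
    have hker : LinearMap.ker φ = LinearMap.ker f := by
      rw [LinearMap.ker_comp, Submodule.ker_mkQ,
        Submodule.comap_map_eq_of_injective P.injective_subtype]
    exact ⟨ι, L, LinearMap.range φ, ⟨(f.quotKerEquivOfSurjective hf).symm ≪≫ₗ
      Submodule.quotEquivOfEq _ _ hker.symm ≪≫ₗ φ.quotKerEquivRange⟩⟩

theorem isWisbauerClass_memSigma : IsWisbauerClass (MemSigma A N) where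
  of_injective_s2 f hf h := memSigma_iff_isSubquotientOfSum.2
    ((memSigma_iff_isSubquotientOfSum.1 h).of_injective_s2 f hf)
  of_surjective f hf h := memSigma_iff_isSubquotientOfSum.2
    ((memSigma_iff_isSubquotientOfSum.1 h).of_surjective f hf)
  dfinsupp D _ _ h := memSigma_iff_isSubquotientOfSum.2
    (IsSubquotientOfSum.dfinsupp D fun i => memSigma_iff_isSubquotientOfSum.1 (h i))

end Subgenerated

/-- if every semisimple right `R`-module belongs to `σ[N]`, then there is a
right `R`-module `M` whose injectivity domain is exactly `σ[N]`. -/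
theorem stmt_2 (R : Type u) [Ring R]
    (N : Type u) [AddCommGroup N] [Module Rᵐᵒᵖ N]
    (hss : ∀ (S : Type u) [AddCommGroup S] [Module Rᵐᵒᵖ S],
      IsSemisimpleModule Rᵐᵒᵖ S → MemSigma Rᵐᵒᵖ N S) :
    ∃ M : ModuleCat.{u} Rᵐᵒᵖ,
      ∀ (K : Type u) [AddCommGroup K] [Module Rᵐᵒᵖ K],
        ModInj Rᵐᵒᵖ M K ↔ MemSigma Rᵐᵒᵖ N K :=
  isWisbauerClass_memSigma.exists_modInj_iff fun S _ _ _ => hss S inferInstance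
end

section
/- Let R be a right uniform ring (R is nonzero and any two nonzero right ideals of R have nonzero intersection), and let M be a right R-module that is nonsingular (Z(M) = 0) and not injective. Then for every right R-module N, M is N-injective if and only if N is singular (Z(N) = N). -/
/-!
If `N` is not singular, some `x ∈ N` has a non-essential annihilator, which over a right uniform
ring forces `ann x = 0`; then `R ≅ xR ⊆ N`, so `M` is `R`-injective, hence injective by Baer's
criterion. Conversely, a linear map from a singular module into a nonsingular one is zero, since
annihilators only grow under linear maps; so the zero map extends every map from a submodule of a
singular `N` into `M`.
-/

universe u

/-- A right ideal of `R` (i.e. a left ideal of `Rᵐᵒᵖ`) is essential if it intersects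
every nonzero right ideal nontrivially. -/
def IsEssentialRightIdeal (R : Type u) [Ring R] (I : Ideal Rᵐᵒᵖ) : Prop :=
  ∀ K : Ideal Rᵐᵒᵖ, K ≠ ⊥ → I ⊓ K ≠ ⊥

/-- The (right) annihilator of an element `x` of a right `R`-module, as a right ideal. -/
def rAnn (R : Type u) [Ring R] (M : Type u) [AddCommGroup M] [Module Rᵐᵒᵖ M] (x : M) :
    Ideal Rᵐᵒᵖ :=
  LinearMap.ker (LinearMap.toSpanSingleton Rᵐᵒᵖ M x)

namespace ModInj

variable {A : Type u} [Ring A] {M N : Type u} [AddCommGroup M] [Module A M]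
  [AddCommGroup N] [Module A N]

theorem of_injective_s3 {N' : Type u} [AddCommGroup N'] [Module A N'] (h : ModInj A M N)
    (φ : N' →ₗ[A] N) (hφ : Function.Injective φ) : ModInj A M N' := by
  intro K f
  let e := Submodule.equivMapOfInjective φ hφ K
  obtain ⟨g, hg⟩ := h (K.map φ) (f ∘ₗ e.symm.toLinearMap)
  refine ⟨g ∘ₗ φ, fun x => ?_⟩
  simpa [e, Submodule.coe_equivMapOfInjective_apply] using hg (e x)

theorem baer (h : ModInj A M A) : Module.Baer A M := fun I g =>
  let ⟨g', hg'⟩ := h I g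
  ⟨g', fun x hx => hg' ⟨x, hx⟩⟩

theorem of_moduleInjective_s3 [Module.Injective A M] : ModInj A M N := fun K f =>
  Module.Injective.out K.subtype K.injective_subtype f

end ModInj

section Annihilator

variable {R : Type u} [Ring R] {M N : Type u} [AddCommGroup M] [Module Rᵐᵒᵖ M]
  [AddCommGroup N] [Module Rᵐᵒᵖ N]

theorem IsEssentialRightIdeal.mono {I J : Ideal Rᵐᵒᵖ} (hIJ : I ≤ J)
    (hI : IsEssentialRightIdeal R I) : IsEssentialRightIdeal R J := fun K hK hJK =>
  hI K hK (le_bot_iff.mp (hJK ▸ inf_le_inf_right K hIJ))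

theorem rAnn_le_rAnn_apply (f : N →ₗ[Rᵐᵒᵖ] M) (x : N) : rAnn R N x ≤ rAnn R M (f x) :=
  fun r (hr : r • x = 0) => show r • f x = 0 by rw [← map_smul, hr, map_zero]

theorem rAnn_apply_of_injective {f : N →ₗ[Rᵐᵒᵖ] M} (hf : Function.Injective f) (x : N) :
    rAnn R M (f x) = rAnn R N x := by
  ext r
  change r • f x = 0 ↔ r • x = 0
  rw [← map_smul, map_eq_zero_iff f hf]

theorem linearMap_eq_zero_of_singular_of_nonsingular
    (hN : ∀ x : N, IsEssentialRightIdeal R (rAnn R N x))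
    (hM : ∀ y : M, IsEssentialRightIdeal R (rAnn R M y) → y = 0) (f : N →ₗ[Rᵐᵒᵖ] M) : f = 0 :=
  LinearMap.ext fun x => hM (f x) ((hN x).mono (rAnn_le_rAnn_apply f x))

end Annihilator

theorem stmt_3_general (R : Type u) [Ring R]
    (hu : ∀ I K : Ideal Rᵐᵒᵖ, I ≠ ⊥ → K ≠ ⊥ → I ⊓ K ≠ ⊥)
    (M : Type u) [AddCommGroup M] [Module Rᵐᵒᵖ M]
    (hns : ∀ x : M, IsEssentialRightIdeal R (rAnn R M x) → x = 0)
    (hni : ¬ ∀ (X : Type u) [AddCommGroup X] [Module Rᵐᵒᵖ X], ModInj Rᵐᵒᵖ M X) :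
    ∀ (N : Type u) [AddCommGroup N] [Module Rᵐᵒᵖ N],
      ModInj Rᵐᵒᵖ M N ↔ ∀ x : N, IsEssentialRightIdeal R (rAnn R N x) := by
  intro N _ _
  constructor
  · intro hMN x
    by_contra hx
    have hann : rAnn R N x = ⊥ := by
      by_contra hne
      exact hx fun K hK => hu _ K hne hK
    have : Module.Injective Rᵐᵒᵖ M :=
      ((hMN.of_injective_s3 _ (LinearMap.ker_eq_bot.mp hann)).baer).injective
    exact hni fun X _ _ => ModInj.of_moduleInjective_s3
  · intro hsing K f
    have hK : ∀ y : K, IsEssentialRightIdeal R (rAnn R K y) := fun y =>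
      rAnn_apply_of_injective K.injective_subtype y ▸ hsing y
    exact ⟨0, fun y => by rw [linearMap_eq_zero_of_singular_of_nonsingular hK hns f]; rfl⟩

/-- over a right uniform ring, the injectivity domain of a nonsingular
non-injective right module consists exactly of the singular modules. -/
theorem stmt_3 (R : Type u) [Ring R] [Nontrivial R]
    (hu : ∀ I K : Ideal Rᵐᵒᵖ, I ≠ ⊥ → K ≠ ⊥ → I ⊓ K ≠ ⊥)
    (M : Type u) [AddCommGroup M] [Module Rᵐᵒᵖ M]
    (hns : ∀ x : M, IsEssentialRightIdeal R (rAnn R M x) → x = 0)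
    (hni : ¬ ∀ (X : Type u) [AddCommGroup X] [Module Rᵐᵒᵖ X], ModInj Rᵐᵒᵖ M X) :
    ∀ (N : Type u) [AddCommGroup N] [Module Rᵐᵒᵖ N],
      ModInj Rᵐᵒᵖ M N ↔ ∀ x : N, IsEssentialRightIdeal R (rAnn R N x) :=
  stmt_3_general R hu M hns hni
end

section
/- Let R be a right semiartinian ring (every nonzero right R-module has nonzero socle). Then the following are equivalent: (1) R has no right i-middle class; (2) every quasi-injective right R-module that is not semisimple is injective. -/
universe u

/-- `R` has no right i-middle class: every right `R`-module is injective or its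
injectivity domain consists precisely of the semisimple modules. -/
def NoRightIMiddleClass (R : Type u) [Ring R] : Prop :=
  ∀ (M : Type u) [AddCommGroup M] [Module Rᵐᵒᵖ M],
    (∀ (N : Type u) [AddCommGroup N] [Module Rᵐᵒᵖ N], ModInj Rᵐᵒᵖ M N) ∨
    (∀ (N : Type u) [AddCommGroup N] [Module Rᵐᵒᵖ N],
      ModInj Rᵐᵒᵖ M N ↔ IsSemisimpleModule Rᵐᵒᵖ N)

/-!
Let `M` be `N`-injective with `N` not semisimple, and let `i : M → E(M)`, `j : N → E(N)` be
injective hulls. The sum `Q` of the images of `N × soc E(M)` under all endomorphisms of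
`E(N) × E(M)` is fully invariant in an injective module, hence quasi-injective, and it contains
a copy of `N`, hence is not semisimple; so by hypothesis `Q` is injective. As `R` is
semiartinian, `soc E(M)` is essential in `E(M)`, so `Q` is essential and thus all of
`E(N) × E(M)`. On the other hand `M` is injective relative to `N` and to the semisimple
`soc E(M)`, and every map from such a module into the essential extension `E(M)` lands in `M`.
Hence the projection of `Q` onto `E(M)` lies in `M`, so `M = E(M)` is injective.
-/

section RelativeInjectivity

variable {A : Type u} [Ring A] {M N : Type u} [AddCommGroup M] [Module A M]
  [AddCommGroup N] [Module A N]

theorem modInj_of_isSemisimpleModule [IsSemisimpleModule A N] : ModInj A M N := by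
  intro K f
  obtain ⟨K', hK'⟩ := exists_isCompl K
  exact ⟨f ∘ₗ K.projectionOnto K' hK', fun x => by simp⟩

theorem forall_modInj_iff_injective :
    (∀ (N : Type u) [AddCommGroup N] [Module A N], ModInj A M N) ↔ Module.Injective A M := by
  refine ⟨fun h => ⟨fun X Y _ _ _ _ f hf g => ?_⟩,
    fun h N _ _ K f => h.out K.subtype K.injective_subtype f⟩
  obtain ⟨g', hg'⟩ := h Y (LinearMap.range f) (g ∘ₗ (LinearEquiv.ofInjective f hf).symm)
  exact ⟨g', fun x => (hg' ⟨f x, x, rfl⟩).trans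
    (congrArg g ((LinearEquiv.ofInjective f hf).symm_apply_apply x))⟩

end RelativeInjectivity

namespace Module.Injective

universe v

variable {A : Type*} [Ring A] {E F : Type v} [AddCommGroup E] [Module A E]
  [AddCommGroup F] [Module A F]

instance prod [Module.Injective A E] [Module.Injective A F] : Module.Injective A (E × F) :=
  ⟨fun _ _ _ _ _ _ f hf g => by
    obtain ⟨h₁, hh₁⟩ := Module.Injective.out f hf (LinearMap.fst A E F ∘ₗ g)
    obtain ⟨h₂, hh₂⟩ := Module.Injective.out f hf (LinearMap.snd A E F ∘ₗ g)
    exact ⟨h₁.prod h₂, fun x => Prod.ext (hh₁ x) (hh₂ x)⟩⟩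

theorem of_linearEquiv [Module.Injective A E] (e : E ≃ₗ[A] F) : Module.Injective A F :=
  ⟨fun _ _ _ _ _ _ f hf g => by
    obtain ⟨h, hh⟩ := Module.Injective.out f hf (e.symm.toLinearMap ∘ₗ g)
    exact ⟨e.toLinearMap ∘ₗ h, fun x => by simp [hh x]⟩⟩

theorem of_isCompl [Module.Injective A E] {V W : Submodule A E} (h : IsCompl V W) :
    Module.Injective A V :=
  ⟨fun _ _ _ _ _ _ f hf g => by
    obtain ⟨k, hk⟩ := Module.Injective.out f hf (V.subtype ∘ₗ g)
    exact ⟨V.projectionOnto W h ∘ₗ k, fun x => by simp [hk x]⟩⟩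

theorem exists_isCompl {V : Submodule A E} [Module.Injective A V] : ∃ W, IsCompl V W := by
  obtain ⟨r, hr⟩ := Module.Injective.out V.subtype V.injective_subtype LinearMap.id
  exact ⟨_, LinearMap.isCompl_of_proj hr⟩

end Module.Injective

open CategoryTheory in
theorem Module.exists_embedding_into_injective {A : Type u} [Ring A] (M : Type u)
    [AddCommGroup M] [Module A M] :
    ∃ (E : Type u) (_ : AddCommGroup E) (_ : Module A E) (i : M →ₗ[A] E),
      Function.Injective i ∧ Module.Injective A E := by
  let X := ModuleCat.of A M
  have := Module.injective_module_of_injective_object A (Injective.under X).carrier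
    (inj := Injective.injective_under X)
  exact ⟨(Injective.under X).carrier, inferInstance, inferInstance, (Injective.ι X).hom,
    (ModuleCat.mono_iff_injective _).mp inferInstance, this⟩

/-- Tested on elements: this is equivalent to `X ≤ V` meeting every nonzero submodule of `V`. -/
def Submodule.IsEssentialIn {A E : Type*} [Ring A] [AddCommGroup E] [Module A E]
    (X V : Submodule A E) : Prop :=
  X ≤ V ∧ ∀ e ∈ V, e ≠ 0 → ∃ r : A, r • e ∈ X ∧ r • e ≠ 0

namespace Submodule.IsEssentialIn

variable {A E F : Type*} [Ring A] [AddCommGroup E] [Module A E] [AddCommGroup F] [Module A F]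
  {X Y V W : Submodule A E}

theorem refl (X : Submodule A E) : X.IsEssentialIn X :=
  ⟨le_rfl, fun e he hne => ⟨1, by rwa [one_smul], by rwa [one_smul]⟩⟩

theorem trans (hXV : X.IsEssentialIn V) (hVW : V.IsEssentialIn W) : X.IsEssentialIn W := by
  refine ⟨hXV.1.trans hVW.1, fun e he hne => ?_⟩
  obtain ⟨r, hrV, hr⟩ := hVW.2 e he hne
  obtain ⟨s, hsX, hs⟩ := hXV.2 (r • e) hrV hr
  exact ⟨s * r, by rwa [mul_smul], by rwa [mul_smul]⟩

theorem mono (h : X.IsEssentialIn V) (hXY : X ≤ Y) (hYV : Y ≤ V) : Y.IsEssentialIn V :=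
  ⟨hYV, fun e he hne => (h.2 e he hne).imp fun _ hr => ⟨hXY hr.1, hr.2⟩⟩

theorem comap_subtype (h : X.IsEssentialIn V) : (X.comap V.subtype).IsEssentialIn ⊤ :=
  ⟨le_top, fun v _ hv => (h.2 v v.2 (by simpa using hv)).imp fun r hr =>
    ⟨hr.1, fun h0 => hr.2 (by simpa using congrArg Subtype.val h0)⟩⟩

theorem prod_left (h : X.IsEssentialIn V) (U : Submodule A F) :
    (X.prod U).IsEssentialIn (V.prod U) := by
  refine ⟨Submodule.prod_mono h.1 le_rfl, fun ⟨a, b⟩ ⟨ha, hb⟩ hne => ?_⟩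
  by_cases ha0 : a = 0
  · subst ha0
    exact ⟨1, by simpa using hb, by simpa using hne⟩
  · obtain ⟨r, hrX, hr⟩ := h.2 a ha ha0
    exact ⟨r, ⟨hrX, U.smul_mem r hb⟩, fun h0 => hr (congrArg Prod.fst h0)⟩

theorem prod_right {X V : Submodule A F} (h : X.IsEssentialIn V) (U : Submodule A E) :
    (U.prod X).IsEssentialIn (U.prod V) := by
  refine ⟨Submodule.prod_mono le_rfl h.1, fun ⟨a, b⟩ ⟨ha, hb⟩ hne => ?_⟩
  by_cases hb0 : b = 0
  · subst hb0
    exact ⟨1, by simpa using ha, by simpa using hne⟩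
  · obtain ⟨r, hrX, hr⟩ := h.2 b hb hb0
    exact ⟨r, ⟨U.smul_mem r ha, hrX⟩, fun h0 => hr (congrArg Prod.snd h0)⟩

theorem prod_top {X : Submodule A E} {Y : Submodule A F} (hX : X.IsEssentialIn ⊤)
    (hY : Y.IsEssentialIn ⊤) : (X.prod Y).IsEssentialIn ⊤ := by
  rw [← Submodule.prod_top]
  exact (hY.prod_right X).trans (hX.prod_left ⊤)

theorem eq_top_of_injective (h : X.IsEssentialIn ⊤) [Module.Injective A X] : X = ⊤ := by
  obtain ⟨W, hW⟩ := Module.Injective.exists_isCompl (V := X)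
  suffices W = ⊥ by simpa [this] using hW.sup_eq_top
  refine (Submodule.eq_bot_iff W).2 fun w hw => by_contra fun hne => ?_
  obtain ⟨r, hrX, hr⟩ := h.2 w trivial hne
  exact hr ((Submodule.disjoint_def.1 hW.disjoint) _ hrX (W.smul_mem r hw))

end Submodule.IsEssentialIn

section InjectiveHull

variable {A E : Type*} [Ring A] [AddCommGroup E] [Module A E]

theorem Submodule.exists_maximal_isEssentialIn (X : Submodule A E) :
    ∃ V, Maximal X.IsEssentialIn V := by
  obtain ⟨V, -, hV⟩ := zorn_le_nonempty₀ {V | X.IsEssentialIn V} (fun c hc hchain y hy => by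
    refine ⟨sSup c, ⟨(hc hy).1.trans (le_sSup hy), fun e he hne => ?_⟩, fun _ => le_sSup⟩
    obtain ⟨V, hVc, heV⟩ := (Submodule.mem_sSup_of_directed ⟨y, hy⟩ hchain.directedOn).1 he
    exact (hc hVc).2 e heV hne) X (.refl X)
  exact ⟨V, hV⟩

theorem Submodule.exists_maximal_disjoint (V : Submodule A E) : ∃ W, Maximal (Disjoint V) W :=
  zorn_le₀ {W | Disjoint V W} fun c hc hchain =>
    ⟨sSup c, hchain.directedOn.disjoint_sSup_right.2 hc, fun _ => le_sSup⟩

theorem Module.Injective.exists_projection_of_disjoint [Module.Injective A E]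
    {V W : Submodule A E} (h : Disjoint V W) :
    ∃ π : E →ₗ[A] E, (∀ v ∈ V, π v = v) ∧ ∀ w ∈ W, π w = 0 := by
  have hinj : Function.Injective (V.subtype.coprod W.subtype) := by
    rw [← LinearMap.ker_eq_bot, LinearMap.ker_coprod_of_disjoint_range, Submodule.ker_subtype,
      Submodule.ker_subtype, Submodule.prod_bot]
    rwa [Submodule.range_subtype, Submodule.range_subtype]
  obtain ⟨π, hπ⟩ := Module.Injective.out _ hinj (V.subtype ∘ₗ LinearMap.fst A V W)
  exact ⟨π, fun v hv => by simpa using hπ (⟨v, hv⟩, 0),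
    fun w hw => by simpa using hπ (0, ⟨w, hw⟩)⟩

/-- If `e ∉ W` had no nonzero multiple `r • π e` in `V`, then `W + A e` would still be
disjoint from `V`. -/
theorem isEssentialIn_range_of_maximal_disjoint {V W : Submodule A E}
    (hW : Maximal (Disjoint V) W) {π : E →ₗ[A] E} (hπV : ∀ v ∈ V, π v = v)
    (hπW : ∀ w ∈ W, π w = 0) : V.IsEssentialIn (LinearMap.range π) := by
  refine ⟨fun v hv => ⟨v, hπV v hv⟩, ?_⟩
  rintro - ⟨e, rfl⟩ hne
  by_contra! hcon
  have hdisj : Disjoint V (W ⊔ Submodule.span A {e}) := by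
    refine Submodule.disjoint_def.2 fun x hxV hx => ?_
    obtain ⟨w, hw, _, hz, rfl⟩ := Submodule.mem_sup.1 hx
    obtain ⟨r, rfl⟩ := Submodule.mem_span_singleton.1 hz
    have hπx : r • π e = w + r • e := by
      rw [← hπV _ hxV, map_add, hπW w hw, zero_add, map_smul]
    rw [← hπx] at hxV ⊢
    exact hcon r hxV
  have heW : e ∈ W := hW.2 hdisj le_sup_left
    (Submodule.mem_sup_right (Submodule.mem_span_singleton_self e))
  exact hne (hπW e heW)

/-- Project onto `V` along a maximal `W` disjoint from it and extend to `E`; the range of the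
extension is an essential extension of `V`, hence equal to `V`. -/
theorem Module.Injective.exists_isCompl_of_isEssentialIn_le [Module.Injective A E]
    {V : Submodule A E} (hV : ∀ V', V.IsEssentialIn V' → V' ≤ V) : ∃ W, IsCompl V W := by
  obtain ⟨W, hW⟩ := V.exists_maximal_disjoint
  obtain ⟨π, hπV, hπW⟩ := Module.Injective.exists_projection_of_disjoint hW.prop
  have hWker : W ≤ LinearMap.ker π := fun w hw => hπW w hw
  have hker : LinearMap.ker π = W := by
    refine le_antisymm (hW.2 (Submodule.disjoint_def.2 fun v hv hv' => ?_) hWker) hWker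
    rw [← hπV v hv]
    exact hv'
  have hrange := hV _ (isEssentialIn_range_of_maximal_disjoint hW hπV hπW)
  refine ⟨W, hW.prop, codisjoint_iff_le_sup.2 fun e _ => ?_⟩
  have hπe : π e ∈ V := hrange ⟨e, rfl⟩
  have hsub : e - π e ∈ W := by
    rw [← hker, LinearMap.mem_ker, map_sub, hπV _ hπe, sub_self]
  simpa using Submodule.add_mem_sup hπe hsub

theorem Module.exists_injective_hull {A : Type u} [Ring A] (M : Type u) [AddCommGroup M]
    [Module A M] : ∃ (E : Type u) (_ : AddCommGroup E) (_ : Module A E) (i : M →ₗ[A] E),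
      Function.Injective i ∧ Module.Injective A E ∧ (LinearMap.range i).IsEssentialIn ⊤ := by
  obtain ⟨E₀, _, _, i₀, hi₀, hE₀⟩ := Module.exists_embedding_into_injective (A := A) M
  obtain ⟨V, hV⟩ := (LinearMap.range i₀).exists_maximal_isEssentialIn
  obtain ⟨W, hVW⟩ := Module.Injective.exists_isCompl_of_isEssentialIn_le
    fun V' hV' => hV.2 (hV.prop.trans hV') hV'.1
  refine ⟨V, _, _, LinearMap.codRestrict V i₀ fun m => hV.prop.1 ⟨m, rfl⟩, fun x y hxy =>
    hi₀ (congrArg Subtype.val hxy), Module.Injective.of_isCompl hVW, ?_⟩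
  rw [LinearMap.range_codRestrict]
  exact hV.prop.comap_subtype

end InjectiveHull

section Socle

def IsSemiartinian (A : Type u) [Ring A] : Prop :=
  ∀ (M : Type u) [AddCommGroup M] [Module A M],
    (∃ x : M, x ≠ 0) → ∃ S : Submodule A M, IsSimpleModule A S

variable {A : Type u} [Ring A] (E : Type u) [AddCommGroup E] [Module A E]

variable (A) in
def socle : Submodule A E :=
  sSup {S : Submodule A E | IsSimpleModule A S}

instance : IsSemisimpleModule A (socle A E) := by
  rw [socle, sSup_eq_iSup]
  exact isSemisimpleModule_biSup_of_isSemisimpleModule_submodule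
    fun _ (_ : IsSimpleModule A _) => inferInstance

theorem IsSemiartinian.socle_isEssentialIn_top (hA : IsSemiartinian A) :
    (socle A E).IsEssentialIn ⊤ := by
  refine ⟨le_top, fun e _ he => ?_⟩
  let C := Submodule.span A {e}
  obtain ⟨S, hS⟩ := hA C ⟨⟨e, Submodule.mem_span_singleton_self e⟩, by simpa using he⟩
  have := IsSimpleModule.nontrivial A S
  obtain ⟨⟨y, hyS⟩, hy⟩ := exists_ne (0 : S)
  obtain ⟨r, hr⟩ := Submodule.mem_span_singleton.1 y.2
  have hsimple : S.map C.subtype ∈ {T : Submodule A E | IsSimpleModule A T} :=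
    IsSimpleModule.congr (S.equivMapOfInjective C.subtype C.injective_subtype).symm
  refine ⟨r, ?_, ?_⟩
  · rw [hr]
    exact le_sSup hsimple ⟨y, hyS, rfl⟩
  · rw [hr]
    exact fun h0 => hy (by ext; simpa using h0)

end Socle

section QuasiInjective

variable {A : Type u} [Ring A] {G : Type u} [AddCommGroup G] [Module A G]

theorem Submodule.isFullyInvariant_iSup_map (Z : Submodule A G) :
    (⨆ φ : Module.End A G, Z.map φ).IsFullyInvariant := fun ψ =>
  Submodule.map_le_iff_le_comap.1 <| by
    rw [Submodule.map_iSup]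
    exact iSup_le fun φ =>
      (Submodule.map_comp φ ψ Z).symm ▸ le_iSup (fun φ => Z.map φ) (ψ ∘ₗ φ)

theorem Submodule.IsFullyInvariant.modInj_self [Module.Injective A G] {Q : Submodule A G}
    (hQ : Q.IsFullyInvariant) : ModInj A Q Q := by
  intro K f
  obtain ⟨φ, hφ⟩ := Module.Injective.out (Q.subtype ∘ₗ K.subtype)
    (Q.injective_subtype.comp K.injective_subtype) (Q.subtype ∘ₗ f)
  exact ⟨φ.restrict (hQ φ), fun x => Subtype.ext (hφ x)⟩

end QuasiInjective

section Absorption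

variable {A : Type u} [Ring A] {M N E : Type u} [AddCommGroup M] [Module A M]
  [AddCommGroup N] [Module A N] [AddCommGroup E] [Module A E]

/-- `h` agrees with `i ∘ g` on the preimage of `M` for some `g : N → M`; a nonzero value of the
difference would have a nonzero multiple in `M`, i.e. a nonzero value on that preimage. -/
theorem ModInj.range_le (hMN : ModInj A M N) {i : M →ₗ[A] E} (hi : Function.Injective i)
    (hess : (LinearMap.range i).IsEssentialIn ⊤) (h : N →ₗ[A] E) :
    LinearMap.range h ≤ LinearMap.range i := by
  let K := (LinearMap.range i).comap h
  obtain ⟨g, hg⟩ := hMN K ((LinearEquiv.ofInjective i hi).symm.toLinearMap ∘ₗ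
    h.restrict (q := LinearMap.range i) fun _ hx => hx)
  let d := h - i ∘ₗ g
  have hdK : ∀ n ∈ K, d n = 0 := fun n hn => by
    have := congrArg i (hg ⟨n, hn⟩)
    simp only [LinearMap.coe_comp, Function.comp_apply, LinearEquiv.coe_coe] at this
    simp [d, this, LinearEquiv.ofInjective_symm_apply]
  rintro _ ⟨n, rfl⟩
  suffices d n = 0 from ⟨g n, (sub_eq_zero.1 this).symm⟩
  by_contra hne
  obtain ⟨r, hr, hr0⟩ := hess.2 (d n) trivial hne
  have hrn : r • n ∈ K := by
    have : h (r • n) = r • d n + i (g (r • n)) := by simp [d, smul_sub]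
    simpa [K, this] using Submodule.add_mem _ hr ⟨g (r • n), rfl⟩
  exact hr0 (by rw [← map_smul, hdK _ hrn])

end Absorption

section Main

variable {A : Type u} [Ring A] {M N E F : Type u} [AddCommGroup M] [Module A M]
  [AddCommGroup N] [Module A N] [AddCommGroup E] [Module A E] [AddCommGroup F] [Module A F]

theorem ModInj.map_snd_iSup_map_prod_le (hMN : ModInj A M N) {i : M →ₗ[A] E}
    (hi : Function.Injective i) (hess : (LinearMap.range i).IsEssentialIn ⊤) (j : N →ₗ[A] F)
    (S : Submodule A E) [IsSemisimpleModule A S] :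
    (⨆ φ : Module.End A (F × E), ((LinearMap.range j).prod S).map φ).map
      (LinearMap.snd A F E) ≤ LinearMap.range i := by
  rw [Submodule.map_iSup]
  refine iSup_le fun φ => ?_
  rw [← Submodule.map_comp, Submodule.map_le_iff_le_comap]
  rintro ⟨_, s⟩ ⟨⟨n, rfl⟩, hs⟩
  let ψ := LinearMap.snd A F E ∘ₗ φ
  have hsplit : ψ (j n, s) = (ψ ∘ₗ LinearMap.inl A F E ∘ₗ j) n +
      (ψ ∘ₗ LinearMap.inr A F E ∘ₗ S.subtype) ⟨s, hs⟩ := by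
    simp [← map_add]
  change ψ (j n, s) ∈ LinearMap.range i
  rw [hsplit]
  exact add_mem (hMN.range_le hi hess _ ⟨n, rfl⟩)
    (modInj_of_isSemisimpleModule.range_le hi hess _ ⟨_, rfl⟩)

theorem IsSemiartinian.injective_of_modInj (hA : IsSemiartinian A)
    (hH : ∀ (Q : Type u) [AddCommGroup Q] [Module A Q],
      ModInj A Q Q → ¬ IsSemisimpleModule A Q → Module.Injective A Q)
    (hMN : ModInj A M N) (hN : ¬ IsSemisimpleModule A N) : Module.Injective A M := by
  obtain ⟨E, _, _, i, hi, _, hiess⟩ := Module.exists_injective_hull (A := A) M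
  obtain ⟨F, _, _, j, hj, _, hjess⟩ := Module.exists_injective_hull (A := A) N
  let Z := (LinearMap.range j).prod (socle A E)
  let Q := ⨆ φ : Module.End A (F × E), Z.map φ
  have hZQ : Z ≤ Q := by simpa using le_iSup (fun φ => Z.map φ) LinearMap.id
  have hjQ : ∀ n, LinearMap.inl A F E (j n) ∈ Q := fun n => hZQ ⟨⟨n, rfl⟩, zero_mem _⟩
  have hQN : ¬ IsSemisimpleModule A Q := fun _ => hN <| .of_injective
    (LinearMap.codRestrict Q (LinearMap.inl A F E ∘ₗ j) hjQ)
    fun x y hxy => hj (congrArg (fun q : Q => (q : F × E).1) hxy)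
  have := hH Q Z.isFullyInvariant_iSup_map.modInj_self hQN
  have hQess : Q.IsEssentialIn ⊤ :=
    (hjess.prod_top (hA.socle_isEssentialIn_top E)).mono hZQ le_top
  have hQ : Q = ⊤ := hQess.eq_top_of_injective
  have hsurj : Function.Surjective i := fun e => by
    have he : ((0, e) : F × E) ∈ Q := by rw [hQ]; trivial
    exact hMN.map_snd_iSup_map_prod_le hi hiess j (socle A E) ⟨_, he, rfl⟩
  exact .of_linearEquiv (LinearEquiv.ofBijective i ⟨hi, hsurj⟩).symm

end Main

/-- for a right semiartinian ring (every nonzero right module has nonzero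
socle, i.e. contains a simple submodule), `R` has no right i-middle class iff every
non-semisimple quasi-injective right `R`-module is injective. -/
theorem stmt_5 (R : Type u) [Ring R]
    (hsa : ∀ (M : Type u) [AddCommGroup M] [Module Rᵐᵒᵖ M],
      (∃ x : M, x ≠ 0) → ∃ S : Submodule Rᵐᵒᵖ M, IsSimpleModule Rᵐᵒᵖ S) :
    NoRightIMiddleClass R ↔
      ∀ (M : Type u) [AddCommGroup M] [Module Rᵐᵒᵖ M],
        ModInj Rᵐᵒᵖ M M → ¬ IsSemisimpleModule Rᵐᵒᵖ M →
          ∀ (N : Type u) [AddCommGroup N] [Module Rᵐᵒᵖ N], ModInj Rᵐᵒᵖ M N := by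
  constructor
  · intro hR M _ _ hMM hM
    exact (hR M).resolve_right fun h => hM ((h M).1 hMM)
  · intro hH M _ _
    refine or_iff_not_imp_left.2 fun hM N _ _ =>
      ⟨fun hMN => by_contra fun hN => hM ?_, fun _ => modInj_of_isSemisimpleModule⟩
    refine forall_modInj_iff_injective.2 (IsSemiartinian.injective_of_modInj hsa ?_ hMN hN)
    exact fun Q _ _ hQQ hQ => forall_modInj_iff_injective.1 (hH Q hQQ hQ)
end

section
/- Let R be a right artinian ring. Then the following are equivalent: (1) R has no right i-middle class; (2) every quasi-injective right R-module that is not semisimple is injective; (3) every two-sided ideal of R contained in J(R) equals 0 or J(R). -/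
universe u

/-- A right ideal of `R` is two-sided. -/
def IsTwoSidedRI (R : Type u) [Ring R] (I : Ideal Rᵐᵒᵖ) : Prop :=
  ∀ x ∈ I, ∀ r : R, x * MulOpposite.op r ∈ I

/-!
Write `A = Rᵐᵒᵖ` and `J` for its Jacobson radical; `A ⧸ J` is semisimple and `J` is nilpotent.

(3 ⇒ 1) If `M` is `N`-injective, it is `A ⧸ ann N`-injective. The two-sided ideal `ann N ⊓ J`
is `0` or `J`. If it is `J`, then `N` is an `A ⧸ J`-module, hence semisimple. If it is `0`, then
`ann N` is a semisimple direct summand of `A` whose complement is `≅ A ⧸ ann N`, so `M` is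
`A`-injective, hence injective by Baer's criterion.

(2 ⇒ 3) For a two-sided ideal `0 ≠ I ⊊ J` we have `I ≠ I²`, as `J` is nilpotent. Let `X` be the
`I`-torsion of an injective module containing `A ⧸ I × I ⧸ I²`. Then `X` is quasi-injective. It
is not semisimple, since `J ⊄ I` acts nontrivially on `A ⧸ I ⊆ X`, and not injective, since
`I → I ⧸ I² ⊆ X` does not extend to `A`: every map `A → X` vanishes on `I`.
-/

namespace ModInj

variable {A M N P : Type u} [Ring A] [AddCommGroup M] [Module A M] [AddCommGroup N] [Module A N]
  [AddCommGroup P] [Module A P]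

theorem of_injective_s6 (h : ModInj A M N) {ι : P →ₗ[A] N} (hι : Function.Injective ι) :
    ModInj A M P := by
  intro K f
  let e := K.equivMapOfInjective ι hι
  obtain ⟨g, hg⟩ := h (K.map ι) (f ∘ₗ e.symm)
  refine ⟨g ∘ₗ ι, fun x => ?_⟩
  simpa [e] using hg (e x)

theorem quotient_ker (h : ModInj A M N) (f : P →ₗ[A] N) : ModInj A M (P ⧸ LinearMap.ker f) :=
  h.of_injective_s6 (LinearMap.ker_eq_bot.mp ((LinearMap.ker f).ker_liftQ_eq_bot' f rfl))

theorem of_isSemisimpleModule [IsSemisimpleModule A N] : ModInj A M N := by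
  intro K f
  obtain ⟨K', hK'⟩ := exists_isCompl K
  exact ⟨f ∘ₗ K.projectionOnto K' hK', fun x => by simp [Submodule.projectionOnto_apply_left]⟩

theorem _root_.LinearPMap.exists_le_of_modInj (m : N →ₗ.[A] M) {K : Submodule A N}
    (hK : ModInj A M K) : ∃ m' : N →ₗ.[A] M, m ≤ m' ∧ K ≤ m'.domain := by
  let D := m.domain.comap K.subtype
  obtain ⟨g, hg⟩ := hK D (m.toFun ∘ₗ (K.subtype ∘ₗ D.subtype).codRestrict m.domain fun x => x.2)
  let p : N →ₗ.[A] M := ⟨K, g⟩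
  have compat (x : m.domain) (y : p.domain) (hxy : (x : N) = y) : m x = p y := by
    have hy : y ∈ D := by simp [D, ← hxy]
    rw [show p y = g y from rfl, hg ⟨y, hy⟩]
    exact congrArg m (Subtype.ext hxy)
  refine ⟨m.sup p compat, m.left_le_sup p compat, ?_⟩
  rw [LinearPMap.domain_sup]
  exact le_sup_right

theorem of_sSup_eq_top {S : Set (Submodule A N)} (hS : ∀ K ∈ S, ModInj A M K)
    (htop : sSup S = ⊤) : ModInj A M N := by
  intro K f
  obtain ⟨m, hfm, hmax⟩ := zorn_le_nonempty_Ici₀ (⟨K, f⟩ : N →ₗ.[A] M)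
    (fun c _ hc _ _ => ⟨LinearPMap.sSup c hc.directedOn, fun _ => LinearPMap.le_sSup _⟩) _ le_rfl
  have hdom : m.domain = ⊤ := by
    refine top_le_iff.mp (htop ▸ sSup_le fun K' hK' => ?_)
    obtain ⟨m', hmm', hK'm'⟩ := m.exists_le_of_modInj (hS K' hK')
    exact hK'm'.trans (hmax hmm').1
  refine ⟨m.toFun ∘ₗ LinearMap.id.codRestrict m.domain (fun x => hdom ▸ trivial), fun x => ?_⟩
  exact (hfm.2 rfl).symm

theorem prod (h₁ : ModInj A M N) (h₂ : ModInj A M P) : ModInj A M (N × P) := by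
  refine of_sSup_eq_top (S := {Submodule.fst A N P, Submodule.snd A N P}) ?_
    (by rw [sSup_pair, Submodule.fst_sup_snd])
  rintro K (rfl | rfl)
  · exact h₁.of_injective_s6 (Submodule.fstEquiv A N P).injective
  · exact h₂.of_injective_s6 (Submodule.sndEquiv A N P).injective

theorem _root_.Module.Injective.modInj (hM : Module.Injective A M) : ModInj A M N := by
  intro K f
  obtain ⟨g, hg⟩ := Module.Injective.extension_property A M K N K.subtype K.injective_subtype f
  exact ⟨g, fun x => LinearMap.congr_fun hg x⟩

theorem injective (h : ModInj A M A) : Module.Injective A M :=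
  Module.Baer.injective fun I g =>
    let ⟨g', hg'⟩ := h I g
    ⟨g', fun x hx => hg' ⟨x, hx⟩⟩

end ModInj

section Semiprimary

variable {A M N P : Type u} [Ring A] [AddCommGroup M] [Module A M] [AddCommGroup N] [Module A N]
  [AddCommGroup P] [Module A P]

instance Ideal.IsTwoSided.inf {I K : Ideal A} [I.IsTwoSided] [K.IsTwoSided] :
    (I ⊓ K).IsTwoSided :=
  ⟨fun b ha => ⟨Ideal.IsTwoSided.mul_mem_of_left b ha.1, Ideal.IsTwoSided.mul_mem_of_left b ha.2⟩⟩

theorem isSemisimpleModule_of_jacobson_le_annihilator [IsSemiprimaryRing A]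
    (h : Ring.jacobson A ≤ Module.annihilator A N) : IsSemisimpleModule A N := by
  have hJ : Module.IsTorsionBySet A N (Ring.jacobson A) :=
    (Module.isTorsionBySet_iff_subset_annihilator A N).mpr h
  let := hJ.module
  exact (hJ.semilinearMap.isSemisimpleModule_iff_of_bijective Function.bijective_id).mpr
    inferInstance

theorem Ideal.eq_bot_of_le_mul_self [IsSemiprimaryRing A] {I : Ideal A} [I.IsTwoSided]
    (hJ : I ≤ Ring.jacobson A) (hI : I ≤ I * I) : I = ⊥ := by
  obtain ⟨n, hn⟩ := IsSemiprimaryRing.isNilpotent (R := A)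
  have hpow (k : ℕ) : I ≤ I ^ k := by
    induction k with
    | zero => rw [Submodule.pow_zero, Ideal.one_eq_top]; exact le_top
    | succ k ih =>
      exact hI.trans ((Ideal.mul_mono le_rfl ih).trans_eq (Ideal.IsTwoSided.pow_succ k).symm)
  exact le_bot_iff.mp ((hpow n).trans ((Ideal.pow_right_mono hJ n).trans_eq hn))

theorem Submodule.exists_isCompl_of_disjoint (L B : Submodule A P) [IsSemisimpleModule A (P ⧸ L)]
    (h : Disjoint B L) : ∃ C, IsCompl B C := by
  obtain ⟨C', hC'⟩ := ComplementedLattice.exists_isCompl (B.map L.mkQ)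
  refine ⟨C'.comap L.mkQ, ?_, ?_⟩
  · rw [Submodule.disjoint_def] at h ⊢
    intro x hxB hxC
    have hx : L.mkQ x ∈ B.map L.mkQ ⊓ C' := ⟨Submodule.mem_map_of_mem hxB, hxC⟩
    rw [hC'.inf_eq_bot, Submodule.mem_bot, Submodule.mkQ_apply, Submodule.Quotient.mk_eq_zero] at hx
    exact h x hxB hx
  · have hL : L ≤ C'.comap L.mkQ := L.ker_mkQ.ge.trans (LinearMap.ker_le_comap _)
    have hmap : (B ⊔ C'.comap L.mkQ).map L.mkQ = ⊤ := by
      rw [Submodule.map_sup, Submodule.map_comap_eq_of_surjective L.mkQ_surjective,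
        hC'.sup_eq_top]
    rw [codisjoint_iff, ← sup_eq_right.mpr (hL.trans le_sup_right)]
    exact (Submodule.map_mkQ_eq_top _ _).mp hmap

/-- `B` is semisimple because `J` kills it, and complemented because it embeds in the
semisimple module `A ⧸ J`. -/
theorem ModInj.ring_of_quotient [IsSemiprimaryRing A] {B : Ideal A}
    (hB : Disjoint B (Ring.jacobson A)) (h : ModInj A M (A ⧸ B)) : ModInj A M A := by
  have : IsSemisimpleModule A (A ⧸ Ring.jacobson A) :=
    isSemisimpleModule_of_jacobson_le_annihilator (Ideal.annihilator_quotient (R := A)).ge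
  have : IsSemisimpleModule A B := isSemisimpleModule_of_jacobson_le_annihilator fun j hj =>
    Module.mem_annihilator.mpr fun b => Subtype.ext <| Submodule.disjoint_def.mp hB _
      (B.smul_mem j b.2) (Ideal.IsTwoSided.mul_mem_of_left _ hj)
  obtain ⟨C, hBC⟩ := Submodule.exists_isCompl_of_disjoint (Ring.jacobson A) B hB
  refine ModInj.of_sSup_eq_top (S := {B, C}) ?_ (by rw [sSup_pair, hBC.sup_eq_top])
  rintro K (rfl | rfl)
  · exact ModInj.of_isSemisimpleModule
  · exact h.of_injective_s6 (Submodule.quotientEquivOfIsCompl _ _ hBC).symm.injective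

end Semiprimary

section Artinian

variable {A M N : Type u} [Ring A] [IsArtinianRing A] [AddCommGroup M] [Module A M]
  [AddCommGroup N] [Module A N]

/-- By the descending chain condition `ann N` is a finite intersection of annihilators of
elements `x`, and `A ⧸ ann x ≅ A ∙ x ⊆ N`. -/
theorem ModInj.quotient_annihilator (h : ModInj A M N) :
    ModInj A M (A ⧸ Module.annihilator A N) := by
  obtain ⟨K, ⟨hannK, hK⟩, hmin⟩ := IsArtinian.set_has_minimal
    {K : Ideal A | Module.annihilator A N ≤ K ∧ ModInj A M (A ⧸ K)}
    ⟨⊤, le_top, by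
      have := h.quotient_ker (0 : A →ₗ[A] N)
      rwa [LinearMap.ker_zero] at this⟩
  have hle (x : N) : K ≤ LinearMap.ker (LinearMap.toSpanSingleton A N x) := by
    by_contra hx
    refine hmin _ ⟨le_inf hannK fun a ha => Module.mem_annihilator.mp ha x, ?_⟩
      (inf_lt_left.mpr hx)
    have := (hK.prod h).quotient_ker (K.mkQ.prod (LinearMap.toSpanSingleton A N x))
    rwa [LinearMap.ker_prod, Submodule.ker_mkQ] at this
  have hK_eq : K = Module.annihilator A N :=
    le_antisymm (fun a ha => Module.mem_annihilator.mpr fun x => hle x ha) hannK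
  exact hK_eq ▸ hK

theorem isSemisimpleModule_of_modInj
    (hI : ∀ I : Ideal A, I.IsTwoSided → I ≤ Ring.jacobson A → I = ⊥ ∨ I = Ring.jacobson A)
    (hM : ¬ModInj A M A) (h : ModInj A M N) : IsSemisimpleModule A N := by
  rcases hI _ inferInstance (inf_le_right : Module.annihilator A N ⊓ _ ≤ _) with hbot | htop
  · exact absurd (h.quotient_annihilator.ring_of_quotient (disjoint_iff.mpr hbot)) hM
  · exact isSemisimpleModule_of_jacobson_le_annihilator (htop.ge.trans inf_le_left)

end Artinian

section QuasiInjective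

open CategoryTheory

variable {A : Type u} [Ring A]

theorem exists_injective_linearMap_to_injective (P : Type u) [AddCommGroup P] [Module A P] :
    ∃ (E : ModuleCat.{u} A) (ι : P →ₗ[A] E), Module.Injective A E ∧ Function.Injective ι :=
  ⟨Injective.under (ModuleCat.of A P), (Injective.ι (ModuleCat.of A P)).hom,
    Module.injective_module_of_injective_object A _ (inj := Injective.injective_under _),
    (ModuleCat.mono_iff_injective _).mp inferInstance⟩

theorem not_modInj_ring_of_le_annihilator {I : Ideal A} {X : Type u} [AddCommGroup X] [Module A X]
    (hI : I ≤ Module.annihilator A X) {φ : I →ₗ[A] X} (hφ : φ ≠ 0) : ¬ModInj A X A := by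
  intro h
  obtain ⟨g, hg⟩ := h I φ
  refine hφ (LinearMap.ext fun x => ?_)
  rw [← hg x, LinearMap.zero_apply, ← mul_one (x : A), ← smul_eq_mul, map_smul,
    Module.mem_annihilator.mp (hI x.2)]

variable (E : Type u) [AddCommGroup E] [Module A E] (I : Ideal A) [I.IsTwoSided]

def Submodule.torsionByIdeal : Submodule A E where
  carrier := {e | ∀ a ∈ I, a • e = 0}
  add_mem' hx hy a ha := by rw [smul_add, hx a ha, hy a ha, add_zero]
  zero_mem' a _ := smul_zero a
  smul_mem' c _ hx a ha := by rw [smul_smul, hx _ (Ideal.IsTwoSided.mul_mem_of_left c ha)]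

theorem Submodule.le_annihilator_torsionByIdeal :
    I ≤ Module.annihilator A (torsionByIdeal E I) :=
  fun a ha => Module.mem_annihilator.mpr fun x => Subtype.ext (x.2 a ha)

/-- Extensions to `E` provided by its injectivity send elements killed by `I` to elements
killed by `I`. -/
theorem modInj_torsionByIdeal [Module.Injective A E] :
    ModInj A (Submodule.torsionByIdeal E I) (Submodule.torsionByIdeal E I) := by
  intro K f
  let X := Submodule.torsionByIdeal E I
  obtain ⟨g, hg⟩ := Module.Injective.extension_property A E K X K.subtype K.injective_subtype
    (X.subtype ∘ₗ f)
  have hgX (x : X) : g x ∈ X := fun a ha => by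
    rw [← map_smul, Module.mem_annihilator.mp (Submodule.le_annihilator_torsionByIdeal E I ha) x,
      map_zero]
  exact ⟨g.codRestrict X hgX, fun x => Subtype.ext (LinearMap.congr_fun hg x)⟩

variable {I}

theorem eq_bot_or_eq_jacobson_of_forall_modInj [IsSemiprimaryRing A]
    (h : ∀ (M : Type u) [AddCommGroup M] [Module A M],
      ModInj A M M → ¬IsSemisimpleModule A M → ModInj A M A)
    (hIJ : I ≤ Ring.jacobson A) : I = ⊥ ∨ I = Ring.jacobson A := by
  by_contra! ⟨hI0, hIJ'⟩
  obtain ⟨z, hzI, hz⟩ : ∃ z ∈ I, z ∉ I * I := SetLike.not_le_iff_exists.mp fun hle =>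
    hI0 (Ideal.eq_bot_of_le_mul_self hIJ hle)
  obtain ⟨j, hjJ, hjI⟩ : ∃ j ∈ Ring.jacobson A, j ∉ I := SetLike.not_le_iff_exists.mp fun hle =>
    hIJ' (le_antisymm hIJ hle)
  let Q := I ⧸ (I • ⊤ : Submodule A I)
  have hIP : I ≤ Module.annihilator A ((A ⧸ I) × Q) := by
    rw [Module.annihilator_prod, Ideal.annihilator_quotient]
    exact le_inf le_rfl ((Module.isTorsionBySet_iff_subset_annihilator _ _).mp
      (Module.isTorsionBySet_quotient_ideal_smul _ I))
  obtain ⟨E, ι, _, hι⟩ := exists_injective_linearMap_to_injective (A := A) ((A ⧸ I) × Q)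
  let X := Submodule.torsionByIdeal E I
  have hιX (p : (A ⧸ I) × Q) : ι p ∈ X := fun a ha => by
    rw [← map_smul, Module.mem_annihilator.mp (hIP ha) p, map_zero]
  let ιX := ι.codRestrict X hιX
  have hιX_inj : Function.Injective ιX := fun p q hpq => hι (congrArg Subtype.val hpq)
  have hX : ¬IsSemisimpleModule A X := by
    intro _
    have h0 : ιX (j • (Submodule.Quotient.mk 1, 0)) = 0 := by
      rw [map_smul]
      exact Module.mem_annihilator.mp (IsSemisimpleModule.jacobson_le_annihilator A X hjJ) _
    have := congrArg Prod.fst (hιX_inj (h0.trans (map_zero ιX).symm))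
    simp only [Prod.smul_fst, ← Submodule.Quotient.mk_smul, smul_eq_mul, mul_one, Prod.fst_zero,
      Submodule.Quotient.mk_eq_zero] at this
    exact hjI this
  have hφ : ιX ∘ₗ LinearMap.inr A _ _ ∘ₗ Submodule.mkQ _ ≠ (0 : I →ₗ[A] X) := fun h0 => hz <| by
    have h1 : ((0 : A ⧸ I), Submodule.Quotient.mk (p := (I • ⊤ : Submodule A I)) ⟨z, hzI⟩) = 0 :=
      hιX_inj ((LinearMap.congr_fun h0 ⟨z, hzI⟩).trans (map_zero ιX).symm)
    rw [Prod.mk_eq_zero, Submodule.Quotient.mk_eq_zero, Submodule.mem_smul_top_iff,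
      Ideal.smul_eq_mul] at h1
    exact h1.2
  exact not_modInj_ring_of_le_annihilator (Submodule.le_annihilator_torsionByIdeal E I) hφ
    (h X (modInj_torsionByIdeal E I) hX)

end QuasiInjective

theorem isTwoSidedRI_iff {R : Type u} [Ring R] {I : Ideal Rᵐᵒᵖ} :
    IsTwoSidedRI R I ↔ I.IsTwoSided :=
  ⟨fun h => ⟨fun b ha => h _ ha b.unop⟩, fun _ _ hx _ => Ideal.IsTwoSided.mul_mem_of_left _ hx⟩

/-- for a right artinian ring, TFAE: (1) no right i-middle class;
(2) every non-semisimple quasi-injective right module is injective;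
(3) every two-sided ideal contained in `J(R)` is `0` or `J(R)`. -/
theorem stmt_6 (R : Type u) [Ring R] [IsArtinianRing Rᵐᵒᵖ] :
    (NoRightIMiddleClass R ↔
      ∀ (M : Type u) [AddCommGroup M] [Module Rᵐᵒᵖ M],
        ModInj Rᵐᵒᵖ M M → ¬ IsSemisimpleModule Rᵐᵒᵖ M →
          ∀ (N : Type u) [AddCommGroup N] [Module Rᵐᵒᵖ N], ModInj Rᵐᵒᵖ M N) ∧
    (NoRightIMiddleClass R ↔
      ∀ I : Ideal Rᵐᵒᵖ, IsTwoSidedRI R I → I ≤ (⊥ : Ideal Rᵐᵒᵖ).jacobson →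
        I = ⊥ ∨ I = (⊥ : Ideal Rᵐᵒᵖ).jacobson) := by
  simp only [Ideal.jacobson_bot, isTwoSidedRI_iff]
  have h12 : NoRightIMiddleClass R → ∀ (M : Type u) [AddCommGroup M] [Module Rᵐᵒᵖ M],
      ModInj Rᵐᵒᵖ M M → ¬IsSemisimpleModule Rᵐᵒᵖ M →
        ∀ (N : Type u) [AddCommGroup N] [Module Rᵐᵒᵖ N], ModInj Rᵐᵒᵖ M N :=
    fun h M _ _ hM hss => (h M).resolve_right fun h' => hss ((h' M).mp hM)
  have h23 : (∀ (M : Type u) [AddCommGroup M] [Module Rᵐᵒᵖ M],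
      ModInj Rᵐᵒᵖ M M → ¬IsSemisimpleModule Rᵐᵒᵖ M →
        ∀ (N : Type u) [AddCommGroup N] [Module Rᵐᵒᵖ N], ModInj Rᵐᵒᵖ M N) →
      ∀ I : Ideal Rᵐᵒᵖ, I.IsTwoSided → I ≤ Ring.jacobson Rᵐᵒᵖ → I = ⊥ ∨ I = Ring.jacobson Rᵐᵒᵖ :=
    fun h _ _ => eq_bot_or_eq_jacobson_of_forall_modInj fun M _ _ hM hss => h M hM hss _
  have h31 : (∀ I : Ideal Rᵐᵒᵖ, I.IsTwoSided → I ≤ Ring.jacobson Rᵐᵒᵖ →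
      I = ⊥ ∨ I = Ring.jacobson Rᵐᵒᵖ) → NoRightIMiddleClass R := by
    intro h M _ _
    by_cases hM : ModInj Rᵐᵒᵖ M Rᵐᵒᵖ
    · exact .inl fun N _ _ => hM.injective.modInj
    · exact .inr fun N _ _ => ⟨isSemisimpleModule_of_modInj h hM, fun _ => .of_isSemisimpleModule⟩
  exact ⟨⟨h12, h31 ∘ h23⟩, ⟨h23 ∘ h12, h31⟩⟩
end

section
/- Let R be a right perfect ring and let I be a two-sided ideal of R with I ⊆ J(R). Then for every right R-module N, the module R/I is N-projective if and only if N·I = 0. -/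
/-!
If `N I = 0`, a map `R/I → K` lifts along `N ↠ K` by sending `1 + I` to a preimage of its image.

Conversely, lifting `R/I → N/NI, 1 + I ↦ n + NI` shows that every `n ∈ N` lies in
`ann_N(I) + NI`, so `M = N / ann_N(I)` satisfies `M I = M`. Since the kernel of a projective cover
`P ↠ M` is superfluous, also `P I = P`, hence `P J = P`. By Bass's Nakayama lemma for projective
modules this forces `P = 0`: the coordinates `a` of `q ∈ P` under a splitting `P → R^(P)` satisfy
`a = a C` for a finite matrix `C` over `J`, and `1 - C` is invertible because `Mₙ(J) ⊆ J(Mₙ(R))`.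
So `M = 0`, i.e. `N I = 0`.
-/

universe u

/-- `M` is `N`-projective. -/
def ModProj (A : Type u) [Ring A] (M : Type u) [AddCommGroup M] [Module A M]
    (N : Type u) [AddCommGroup N] [Module A N] : Prop :=
  ∀ (K : Type u) [AddCommGroup K] [Module A K] (g : N →ₗ[A] K),
    Function.Surjective g → ∀ f : M →ₗ[A] K, ∃ h : M →ₗ[A] N, ∀ x : M, g (h x) = f x

/-- A submodule `K ≤ P` is superfluous. -/
def Superfluous (A : Type u) [Ring A] {P : Type u} [AddCommGroup P] [Module A P]
    (K : Submodule A P) : Prop :=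
  ∀ L : Submodule A P, K ⊔ L = ⊤ → L = ⊤

/-- `R` is right perfect: every right `R`-module has a projective cover. -/
def RightPerfect (R : Type u) [Ring R] : Prop :=
  ∀ (M : Type u) [AddCommGroup M] [Module Rᵐᵒᵖ M],
    ∃ (P : ModuleCat.{u} Rᵐᵒᵖ) (p : P →ₗ[Rᵐᵒᵖ] M),
      (∀ (N : Type u) [AddCommGroup N] [Module Rᵐᵒᵖ N], ModProj Rᵐᵒᵖ P N) ∧
      Function.Surjective p ∧ Superfluous Rᵐᵒᵖ (LinearMap.ker p)

theorem exists_mul_one_sub_eq_one_of_mem_jacobson_bot {A : Type*} [Ring A] {x : A}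
    (hx : x ∈ (⊥ : Ideal A).jacobson) : ∃ z : A, z * (1 - x) = 1 := by
  obtain ⟨z, hz⟩ := Ideal.mem_jacobson_iff.1 hx (-1)
  rw [Ideal.mem_bot, sub_eq_zero] at hz
  exact ⟨z, by rw [mul_sub, mul_one, ← hz]; noncomm_ring⟩

theorem isUnit_one_sub_of_mem_jacobson_bot {A : Type*} [Ring A] {x : A}
    (hx : x ∈ (⊥ : Ideal A).jacobson) : IsUnit (1 - x) := by
  obtain ⟨z, hz⟩ := exists_mul_one_sub_eq_one_of_mem_jacobson_bot hx
  -- `z = 1 + z x` has a left inverse too, which then has to be `1 - x`.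
  have hz' : 1 - -(z * x) = z := by
    rw [sub_neg_eq_add, ← hz]; noncomm_ring
  obtain ⟨w, hw⟩ := exists_mul_one_sub_eq_one_of_mem_jacobson_bot
    (neg_mem (Ideal.mul_mem_left _ z hx))
  rw [hz'] at hw
  have hw' : w = 1 - x :=
    calc w = w * z * (1 - x) := by rw [mul_assoc, hz, mul_one]
      _ = 1 - x := by rw [hw, one_mul]
  exact ⟨⟨1 - x, z, hw' ▸ hw, hz⟩, rfl⟩

namespace Matrix

theorem eq_zero_of_vecMul_eq_self {A : Type*} [Ring A] {n : Type*} [Fintype n]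
    [DecidableEq n] {C : Matrix n n A} (hC : ∀ i j, C i j ∈ (⊥ : Ideal A).jacobson)
    {a : n → A} (ha : a ᵥ* C = a) : a = 0 := by
  have hC' : C ∈ (⊥ : Ideal (Matrix n n A)).jacobson := by
    rw [← Ideal.matrix_bot n]; exact Ideal.matrix_jacobson_le _ hC
  obtain ⟨u, hu⟩ := isUnit_one_sub_of_mem_jacobson_bot hC'
  have h0 : a ᵥ* (1 - C) = 0 := by rw [vecMul_sub, vecMul_one, ha, sub_self]
  calc a = a ᵥ* (↑u * ↑u⁻¹ : Matrix n n A) := by rw [u.mul_inv, vecMul_one]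
    _ = 0 := by rw [← vecMul_vecMul, hu, h0, zero_vecMul]

end Matrix

theorem LinearMap.apply_mem_of_mem_smul_top {A P ι : Type*} [Ring A] [AddCommGroup P]
    [Module A P] {I : Ideal A} [I.IsTwoSided] (s : P →ₗ[A] ι →₀ A) {z : P}
    (hz : z ∈ I • (⊤ : Submodule A P)) (i : ι) : s z i ∈ I := by
  revert i
  refine Submodule.smul_induction_on hz (fun r hr n _ i => ?_) (fun m n hm hn i => ?_)
  · rw [map_smul, Finsupp.smul_apply, smul_eq_mul]
    exact I.mul_mem_right _ hr
  · rw [map_add, Finsupp.add_apply]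
    exact add_mem (hm i) (hn i)

open Matrix in
theorem Module.Projective.subsingleton_of_jacobson_smul_top_eq_top {A P : Type*} [Ring A]
    [AddCommGroup P] [Module A P] [Module.Projective A P]
    (h : (⊥ : Ideal A).jacobson • (⊤ : Submodule A P) = ⊤) : Subsingleton P := by
  classical
  obtain ⟨s, hs⟩ := Module.projective_def.1 ‹_›
  have hcoord (z : P) (i : P) : s z i ∈ (⊥ : Ideal A).jacobson :=
    s.apply_mem_of_mem_smul_top (h.ge Submodule.mem_top) i
  refine subsingleton_of_forall_eq 0 fun q => ?_
  set T := (s q).support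
  have hexp : s q = ∑ j ∈ T, s q j • s j := by
    conv_lhs => rw [← hs q]
    rw [Finsupp.linearCombination_apply, Finsupp.sum, map_sum]
    simp only [id, map_smul, T]
  have hrel : (fun i : T => s q i) ᵥ* of (fun j i : T => s j i) = fun i : T => s q i := by
    ext i
    simp only [vecMul, dotProduct, of_apply]
    conv_rhs => rw [hexp]
    rw [Finsupp.finsetSum_apply, ← Finset.sum_coe_sort T]
    rfl
  have hzero := eq_zero_of_vecMul_eq_self (fun j i : T => hcoord j i) hrel
  have hsq : s q = 0 := by
    ext i
    by_contra hi
    exact hi (congrFun hzero ⟨i, Finsupp.mem_support_iff.2 hi⟩)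
  rw [← hs q, hsq, map_zero]

theorem IsTwoSidedRI.isTwoSided {R : Type u} [Ring R] {I : Ideal Rᵐᵒᵖ} (hI : IsTwoSidedRI R I) :
    I.IsTwoSided :=
  ⟨fun b ha => hI _ ha b.unop⟩

theorem Superfluous.smul_top_eq_top {A P : Type u} {M : Type*} [Ring A] [AddCommGroup P]
    [Module A P] [AddCommGroup M] [Module A M] {p : P →ₗ[A] M}
    (hker : Superfluous A (LinearMap.ker p)) (hp : Function.Surjective p) {I : Ideal A}
    (hM : I • (⊤ : Submodule A M) = ⊤) :
    I • (⊤ : Submodule A P) = ⊤ :=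
  hker _ <| by
    rw [sup_comm, ← Submodule.comap_map_eq, Submodule.map_smul'', Submodule.map_top,
      LinearMap.range_eq_top.2 hp, hM, Submodule.comap_top]

section ModProjQuotient

open Submodule

variable {A N : Type u} [Ring A] [AddCommGroup N] [Module A N] (I : Ideal A)

theorem modProj_quotient_of_forall_smul_eq_zero (h : ∀ n : N, ∀ x ∈ I, x • n = 0) :
    ModProj A (A ⧸ I) N := by
  intro K _ _ g hg f
  obtain ⟨n, hn⟩ := hg (f (Submodule.Quotient.mk 1))
  refine ⟨I.liftQ (LinearMap.toSpanSingleton A N n) fun x hx => LinearMap.mem_ker.2 (h n x hx),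
    ?_⟩
  rintro ⟨a⟩
  have ha : (Submodule.Quotient.mk a : A ⧸ I) = a • Submodule.Quotient.mk 1 := by
    rw [← Quotient.mk_smul, smul_eq_mul, mul_one]
  rw [Quotient.quot_mk_eq_mk, liftQ_apply, LinearMap.toSpanSingleton_apply, map_smul, hn, ha,
    map_smul]

def annihilatedBy [I.IsTwoSided] (N : Type u) [AddCommGroup N] [Module A N] : Submodule A N where
  carrier := {n | ∀ x ∈ I, x • n = 0}
  add_mem' hm hn x hx := by rw [smul_add, hm x hx, hn x hx, add_zero]
  zero_mem' x _ := smul_zero x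
  smul_mem' a _ hm x hx := by rw [smul_smul]; exact hm _ (I.mul_mem_right a hx)

variable [I.IsTwoSided]

theorem annihilatedBy_sup_smul_top_eq_top (h : ModProj A (A ⧸ I) N) :
    annihilatedBy I N ⊔ I • ⊤ = ⊤ := by
  refine eq_top_iff.2 fun n _ => ?_
  set W := I • (⊤ : Submodule A N)
  have hI : I ≤ LinearMap.ker (LinearMap.toSpanSingleton A _ (W.mkQ n)) := fun x hx => by
    rw [LinearMap.mem_ker, LinearMap.toSpanSingleton_apply, mkQ_apply, ← Quotient.mk_smul,
      Quotient.mk_eq_zero]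
    exact smul_mem_smul hx mem_top
  obtain ⟨g, hg⟩ := h _ W.mkQ W.mkQ_surjective (I.liftQ _ hI)
  refine mem_sup.2 ⟨_, fun x hx => ?_, _, ?_, add_sub_cancel (g (Submodule.Quotient.mk 1)) n⟩
  · rw [← map_smul, ← Quotient.mk_smul, smul_eq_mul, mul_one, (Quotient.mk_eq_zero I).2 hx,
      map_zero]
  · have hg1 := (hg (Submodule.Quotient.mk 1)).symm
    rwa [liftQ_apply, LinearMap.toSpanSingleton_apply, one_smul, mkQ_apply, mkQ_apply,
      Submodule.Quotient.eq] at hg1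

theorem smul_top_quotient_annihilatedBy_eq_top (h : ModProj A (A ⧸ I) N) :
    I • (⊤ : Submodule A (N ⧸ annihilatedBy I N)) = ⊤ := by
  have := (map_mkQ_eq_top _ _).2 (annihilatedBy_sup_smul_top_eq_top I h)
  rwa [map_smul'', Submodule.map_top, range_mkQ] at this

end ModProjQuotient

theorem ModProj.projective {A P : Type u} [Ring A] [AddCommGroup P] [Module A P]
    (h : ModProj A P (P →₀ A)) : Module.Projective A P := by
  obtain ⟨s, hs⟩ := h P _ (Finsupp.linearCombination_id_surjective A P) LinearMap.id
  exact ⟨s, hs⟩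

/-- if `R` is right perfect and `I ⊆ J(R)` is a two-sided ideal, then for
every right `R`-module `N`, `R/I` is `N`-projective iff `N·I = 0`. -/
theorem stmt_11 (R : Type u) [Ring R] (hperf : RightPerfect R)
    (I : Ideal Rᵐᵒᵖ) (hI2 : IsTwoSidedRI R I) (hIJ : I ≤ (⊥ : Ideal Rᵐᵒᵖ).jacobson) :
    ∀ (N : Type u) [AddCommGroup N] [Module Rᵐᵒᵖ N],
      ModProj Rᵐᵒᵖ (Rᵐᵒᵖ ⧸ I) N ↔ ∀ (n : N), ∀ x ∈ I, x • n = 0 := by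
  have hI := hI2.isTwoSided
  intro N _ _
  refine ⟨fun hproj => ?_, modProj_quotient_of_forall_smul_eq_zero I⟩
  obtain ⟨P, p, hP, hp, hker⟩ := hperf (N ⧸ annihilatedBy I N)
  have hPproj := (hP _).projective
  have hPI := hker.smul_top_eq_top hp (smul_top_quotient_annihilatedBy_eq_top I hproj)
  have : Subsingleton P := Module.Projective.subsingleton_of_jacobson_smul_top_eq_top <|
    top_le_iff.1 (hPI ▸ Submodule.smul_mono_left hIJ)
  have hN : annihilatedBy I N = ⊤ := Submodule.Quotient.subsingleton_iff.1 hp.subsingleton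
  exact fun n => hN.ge (Submodule.mem_top (x := n))
end

section
/- Let R be an artinian ring that is not semisimple and whose right p-profile is linearly ordered. Then for every right R-module M that is not p-poor, there exists a simple right R-module S whose projectivity domain is strictly contained in the projectivity domain of M. -/
/-!
If `M` is `N`-projective for some non-semisimple `N`, pick a non-semisimple cyclic submodule
`C ≤ N`. Some simple module `S` is not `C`-projective: otherwise every simple quotient of the
finitely generated module `C` would split off, and so could not contain the socle of `C`. Relative
projectivity passes to submodules, so `S` is not `N`-projective either, and linearity of the
p-profile forces the projectivity domain of `S` into that of `M`; `N` makes the inclusion strict.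
-/

universe u

/-- The right p-profile of `R` is linearly ordered: projectivity domains of any two
right `R`-modules are comparable. -/
def PProfileLinear (R : Type u) [Ring R] : Prop :=
  ∀ (M N : Type u) [AddCommGroup M] [Module Rᵐᵒᵖ M] [AddCommGroup N] [Module Rᵐᵒᵖ N],
    (∀ (X : Type u) [AddCommGroup X] [Module Rᵐᵒᵖ X],
      ModProj Rᵐᵒᵖ M X → ModProj Rᵐᵒᵖ N X) ∨
    (∀ (X : Type u) [AddCommGroup X] [Module Rᵐᵒᵖ X],
      ModProj Rᵐᵒᵖ N X → ModProj Rᵐᵒᵖ M X)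

namespace ModProj

variable {A : Type u} [Ring A] {M N : Type u} [AddCommGroup M] [Module A M]
  [AddCommGroup N] [Module A N]

theorem of_lift_mkQ
    (H : ∀ (L : Submodule A N) (f : M →ₗ[A] N ⧸ L), ∃ h : M →ₗ[A] N, L.mkQ ∘ₗ h = f) :
    ModProj A M N := by
  intro K _ _ g hg f
  let e := g.quotKerEquivOfSurjective hg
  obtain ⟨h, hh⟩ := H (LinearMap.ker g) (e.symm.toLinearMap ∘ₗ f)
  refine ⟨h, fun x => ?_⟩
  simpa [e] using congr(e ($hh x))

theorem of_isSemisimpleModule [IsSemisimpleModule A N] : ModProj A M N := by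
  refine of_lift_mkQ fun L f => ?_
  obtain ⟨q, hq⟩ := exists_isCompl L
  let e := L.quotientEquivOfIsCompl q hq
  refine ⟨q.subtype ∘ₗ e.toLinearMap ∘ₗ f, LinearMap.ext fun x => ?_⟩
  exact e.symm_apply_apply (f x)

/-- `p ⧸ L` embeds in `N ⧸ L.map p.subtype`, so a lift to `N` of a map into `p ⧸ L` lands in `p`. -/
theorem submodule (hM : ModProj A M N) (p : Submodule A N) : ModProj A M p := by
  refine of_lift_mkQ fun L f => ?_
  let Q := L.map p.subtype
  let ι := L.mapQ Q p.subtype (Submodule.le_comap_map _ _)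
  have hι : Function.Injective ι := by
    rw [← LinearMap.ker_eq_bot, Submodule.ker_mapQ,
      Submodule.comap_map_eq_of_injective p.injective_subtype, Submodule.mkQ_map_self]
  obtain ⟨h, hh⟩ := hM _ Q.mkQ Q.mkQ_surjective (ι ∘ₗ f)
  have hmem (x : M) : h x ∈ p := by
    obtain ⟨z, hz⟩ := L.mkQ_surjective (f x)
    have hQ : h x - z ∈ Q := by
      rw [← Submodule.Quotient.eq, ← Submodule.mkQ_apply, hh x, LinearMap.comp_apply, ← hz]
      rfl
    simpa using add_mem (Submodule.map_subtype_le p L hQ) z.2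
  refine ⟨h.codRestrict p hmem, LinearMap.ext fun x => hι ?_⟩
  exact hh x

end ModProj

section

variable {A : Type u} [Ring A]

theorem isSemisimpleModule_of_forall_isSimpleModule_modProj (C : Type u) [AddCommGroup C]
    [Module A C] [Module.Finite A C]
    (h : ∀ S : ModuleCat.{u} A, IsSimpleModule A S → ModProj A S C) :
    IsSemisimpleModule A C := by
  rw [← sSup_simples_eq_top_iff_isSemisimpleModule]
  by_contra hs
  obtain ⟨m, hm, hsm⟩ := (eq_top_or_exists_le_coatom
    (sSup {m : Submodule A C | IsSimpleModule A m})).resolve_left hs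
  have := isSimpleModule_iff_isCoatom.2 hm
  have := IsSimpleModule.nontrivial A (C ⧸ m)
  obtain ⟨σ, hσ⟩ := h (ModuleCat.of A (C ⧸ m)) ‹_› _ m.mkQ m.mkQ_surjective LinearMap.id
  have hσinj : Function.Injective σ := Function.LeftInverse.injective hσ
  have hrange : LinearMap.range σ ≤ m :=
    (le_sSup (s := {m : Submodule A C | IsSimpleModule A m})
      (IsSimpleModule.congr (LinearEquiv.ofInjective σ hσinj).symm)).trans hsm
  obtain ⟨z, hz⟩ := exists_ne (0 : C ⧸ m)
  have hσz := (Submodule.Quotient.mk_eq_zero m).2 (hrange ⟨z, rfl⟩)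
  rw [← Submodule.mkQ_apply, hσ z, LinearMap.id_apply] at hσz
  exact hz hσz

theorem exists_isSimpleModule_not_modProj {N : Type u} [AddCommGroup N] [Module A N]
    (hN : ¬ IsSemisimpleModule A N) :
    ∃ S : ModuleCat.{u} A, IsSimpleModule A S ∧ ¬ ModProj A S N := by
  have hcyc : ∃ n : N, ¬ IsSemisimpleModule A (A ∙ n) := by
    by_contra! hc
    refine hN (isSemisimpleModule_of_isSemisimpleModule_submodule' hc ?_)
    exact eq_top_iff.2 fun x _ => Submodule.mem_iSup_of_mem x (Submodule.mem_span_singleton_self x)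
  obtain ⟨n, hn⟩ := hcyc
  by_contra! hc
  exact hn (isSemisimpleModule_of_forall_isSimpleModule_modProj _
    fun S hS => (hc S hS).submodule _)

end

theorem stmt_14_general (R : Type u) [Ring R] (hlin : PProfileLinear R)
    (M : Type u) [AddCommGroup M] [Module Rᵐᵒᵖ M]
    (hM : ¬ ∀ (N : Type u) [AddCommGroup N] [Module Rᵐᵒᵖ N],
      ModProj Rᵐᵒᵖ M N ↔ IsSemisimpleModule Rᵐᵒᵖ N) :
    ∃ S : ModuleCat.{u} Rᵐᵒᵖ, IsSimpleModule Rᵐᵒᵖ S ∧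
      (∀ (N : Type u) [AddCommGroup N] [Module Rᵐᵒᵖ N],
        ModProj Rᵐᵒᵖ S N → ModProj Rᵐᵒᵖ M N) ∧
      (∃ N : ModuleCat.{u} Rᵐᵒᵖ, ModProj Rᵐᵒᵖ M N ∧ ¬ ModProj Rᵐᵒᵖ S N) := by
  obtain ⟨N, hMN, hN⟩ : ∃ N : ModuleCat.{u} Rᵐᵒᵖ,
      ModProj Rᵐᵒᵖ M N ∧ ¬ IsSemisimpleModule Rᵐᵒᵖ N := by
    by_contra! hc
    exact hM fun N _ _ => ⟨hc (ModuleCat.of _ N), fun _ => ModProj.of_isSemisimpleModule⟩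
  obtain ⟨S, hS, hSN⟩ := exists_isSimpleModule_not_modProj hN
  rcases hlin S M with hSM | hMS
  · exact ⟨S, hS, hSM, N, hMN, hSN⟩
  · exact absurd (hMS N hMN) hSN

/-- if `R` is (two-sided) artinian, not semisimple, and its right
p-profile is linearly ordered, then for every right module `M` that is not p-poor there
is a simple module `S` whose projectivity domain is strictly contained in that of `M`. -/
theorem stmt_14 (R : Type u) [Ring R] [IsArtinianRing R] [IsArtinianRing Rᵐᵒᵖ]
    (hns : ¬ IsSemisimpleRing Rᵐᵒᵖ) (hlin : PProfileLinear R)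
    (M : Type u) [AddCommGroup M] [Module Rᵐᵒᵖ M]
    (hM : ¬ ∀ (N : Type u) [AddCommGroup N] [Module Rᵐᵒᵖ N],
      ModProj Rᵐᵒᵖ M N ↔ IsSemisimpleModule Rᵐᵒᵖ N) :
    ∃ S : ModuleCat.{u} Rᵐᵒᵖ, IsSimpleModule Rᵐᵒᵖ S ∧
      (∀ (N : Type u) [AddCommGroup N] [Module Rᵐᵒᵖ N],
        ModProj Rᵐᵒᵖ S N → ModProj Rᵐᵒᵖ M N) ∧
      (∃ N : ModuleCat.{u} Rᵐᵒᵖ, ModProj Rᵐᵒᵖ M N ∧ ¬ ModProj Rᵐᵒᵖ S N) :=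
  stmt_14_general R hlin M hM
end

section
/- Let R be a right super QF ring and let I be a two-sided ideal of R. Then the quotient ring R/I is right super QF. -/
universe u

/-- `R` is right super QF: for all right `R`-modules `M, N`, `M` is `N`-injective iff
`M` is `N`-projective. -/
def RightSuperQF (R : Type u) [Ring R] : Prop :=
  ∀ (M N : Type u) [AddCommGroup M] [Module Rᵐᵒᵖ M] [AddCommGroup N] [Module Rᵐᵒᵖ N],
    ModInj Rᵐᵒᵖ M N ↔ ModProj Rᵐᵒᵖ M N

/-! Right modules over `R/I` are the right `R`-modules killed by `I`, and between them
`R`-linear maps and `R`-submodules are the same as `R/I`-linear maps and `R/I`-submodules. So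
relative injectivity and relative projectivity of `R/I`-modules can both be read over `R`, where
they agree. The one point needing care is that a quotient `K` of an `R/I`-module `N`, taken
over `R`, is again an `R/I`-module: `I` kills `N`, hence its image `K`. -/

open Function

def SMulFactors {A B : Type*} [Ring A] [Ring B] (π : A →+* B) (P : Type*) [SMul A P] [SMul B P] :
    Prop :=
  ∀ (a : A) (x : P), π a • x = a • x

section LinearMaps

variable {A B : Type*} [Ring A] [Ring B] {π : A →+* B}
  {P Q : Type*} [AddCommGroup P] [AddCommGroup Q] [Module A P] [Module B P] [Module A Q]
  [Module B Q]

def LinearMap.restrictAlong (hP : SMulFactors π P) (hQ : SMulFactors π Q) (f : P →ₗ[B] Q) :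
    P →ₗ[A] Q where
  toFun := f
  map_add' := f.map_add
  map_smul' a x := by rw [RingHom.id_apply, ← hP, ← hQ, f.map_smul]

def LinearMap.extendAlong (hπ : Surjective π) (hP : SMulFactors π P) (hQ : SMulFactors π Q)
    (f : P →ₗ[A] Q) : P →ₗ[B] Q where
  toFun := f
  map_add' := f.map_add
  map_smul' b x := by
    obtain ⟨a, rfl⟩ := hπ b
    rw [RingHom.id_apply, hP, hQ, f.map_smul]

def Submodule.restrictAlong (hP : SMulFactors π P) (K : Submodule B P) : Submodule A P where
  __ := K.toAddSubmonoid
  smul_mem' a x hx := hP a x ▸ K.smul_mem (π a) hx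

def Submodule.extendAlong (hπ : Surjective π) (hP : SMulFactors π P) (K : Submodule A P) :
    Submodule B P where
  __ := K.toAddSubmonoid
  smul_mem' b x hx := by
    obtain ⟨a, rfl⟩ := hπ b
    exact (hP a x).symm ▸ K.smul_mem a hx

end LinearMaps

section Descent

variable {A B : Type*} [Ring A] [Ring B] {π : A →+* B} {K : Type*} [AddCommGroup K] [Module A K]

theorem smul_eq_smul_of_map_eq (hK : ∀ a : A, π a = 0 → ∀ k : K, a • k = 0) {a a' : A}
    (h : π a = π a') (k : K) : a • k = a' • k := by
  rw [← sub_eq_zero, ← sub_smul]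
  exact hK _ (by rw [map_sub, h, sub_self]) k

theorem exists_module_smulFactors (hπ : Surjective π)
    (hK : ∀ a : A, π a = 0 → ∀ k : K, a • k = 0) : ∃ _ : Module B K, SMulFactors π K := by
  let : SMul B K := ⟨fun b k => (hπ b).choose • k⟩
  have hsmul : SMulFactors π K := fun a k => smul_eq_smul_of_map_eq hK (hπ (π a)).choose_spec k
  exact ⟨hπ.moduleLeft π hsmul, hsmul⟩

end Descent

section SurjectiveRingHom

variable {A B : Type u} [Ring A] [Ring B] {π : A →+* B}
  {M N : Type u} [AddCommGroup M] [Module A M] [Module B M] [AddCommGroup N] [Module A N]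
  [Module B N]

theorem modInj_iff_of_surjective (hπ : Surjective π) (hM : SMulFactors π M)
    (hN : SMulFactors π N) : ModInj B M N ↔ ModInj A M N := by
  constructor
  · intro hB K f
    let fB : K.extendAlong hπ hN →ₗ[B] M :=
      { toFun x := f ⟨x, x.2⟩
        map_add' x y := f.map_add ⟨x, x.2⟩ ⟨y, y.2⟩
        map_smul' b x := by
          obtain ⟨a, rfl⟩ := hπ b
          have hx : (π a • x : N) = a • (x : N) := hN a x
          simp only [RingHom.id_apply, SetLike.val_smul, hx]
          rw [hM]
          exact f.map_smul a ⟨x, x.2⟩ }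
    obtain ⟨g, hg⟩ := hB _ fB
    exact ⟨g.restrictAlong hN hM, fun x => hg ⟨x, x.2⟩⟩
  · intro hA K f
    let fA : K.restrictAlong hN →ₗ[A] M :=
      { toFun x := f ⟨x, x.2⟩
        map_add' x y := f.map_add ⟨x, x.2⟩ ⟨y, y.2⟩
        map_smul' a x := by
          simp only [RingHom.id_apply, SetLike.val_smul, ← hN a, ← hM a]
          exact f.map_smul (π a) ⟨x, x.2⟩ }
    obtain ⟨g, hg⟩ := hA _ fA
    exact ⟨g.extendAlong hπ hN hM, fun x => hg ⟨x, x.2⟩⟩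

theorem modProj_iff_of_surjective (hπ : Surjective π) (hM : SMulFactors π M)
    (hN : SMulFactors π N) : ModProj B M N ↔ ModProj A M N := by
  constructor
  · intro hB K _ _ g hg f
    have hK : ∀ a : A, π a = 0 → ∀ k : K, a • k = 0 := by
      intro a ha k
      obtain ⟨n, rfl⟩ := hg k
      rw [← g.map_smul, ← hN, ha, zero_smul, g.map_zero]
    obtain ⟨_, hKB⟩ := exists_module_smulFactors hπ hK
    obtain ⟨h, hh⟩ := hB K (g.extendAlong hπ hN hKB) hg (f.extendAlong hπ hM hKB)
    exact ⟨h.restrictAlong hM hN, hh⟩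
  · intro hA K _ _ g hg f
    let : Module A K := Module.compHom K π
    have hK : SMulFactors π K := fun _ _ => rfl
    obtain ⟨h, hh⟩ := hA K (g.restrictAlong hN hK) hg (f.restrictAlong hM hK)
    exact ⟨h.extendAlong hπ hM hN, hh⟩

end SurjectiveRingHom

theorem modInj_iff_modProj_of_surjective {A B : Type u} [Ring A] [Ring B] {π : A →+* B}
    (hπ : Surjective π)
    (hA : ∀ (M N : Type u) [AddCommGroup M] [Module A M] [AddCommGroup N] [Module A N],
      ModInj A M N ↔ ModProj A M N)
    (M N : Type u) [AddCommGroup M] [Module B M] [AddCommGroup N] [Module B N] :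
    ModInj B M N ↔ ModProj B M N := by
  let : Module A M := Module.compHom M π
  let : Module A N := Module.compHom N π
  have hM : SMulFactors π M := fun _ _ => rfl
  have hN : SMulFactors π N := fun _ _ => rfl
  rw [modInj_iff_of_surjective hπ hM hN, modProj_iff_of_surjective hπ hM hN, hA]

theorem RightSuperQF.of_surjective {R S : Type u} [Ring R] [Ring S] (hR : RightSuperQF R)
    (f : R →+* S) (hf : Surjective f) : RightSuperQF S :=
  fun M N _ _ _ _ => modInj_iff_modProj_of_surjective (π := RingHom.op f)
    (MulOpposite.op_surjective.comp (hf.comp MulOpposite.unop_surjective)) hR M N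

/-- a quotient of a right super QF ring by a two-sided ideal is right
super QF. -/
theorem stmt_15 (R : Type u) [Ring R] (h : RightSuperQF R) (I : TwoSidedIdeal R) :
    RightSuperQF I.ringCon.Quotient :=
  h.of_surjective _ I.ringCon.mk'_surjective
end

section
/- Let R₁ and R₂ be right super QF rings. Then the product ring R₁ × R₂ is right super QF. -/
universe u

/-!
Write `S = R₁ × R₂`, so that right `S`-modules are modules over `Sᵐᵒᵖ = R₁ᵐᵒᵖ × R₂ᵐᵒᵖ`, and let
`e₁ + e₂ = 1` be the corresponding central idempotents. Every `S`-module splits as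
`M = e₁ M ⊕ e₂ M`, where `eᵢ M` is an `Rᵢ`-module, and `S`-linear maps and submodules split
accordingly. Hence `M` is `N`-injective (resp. `N`-projective) over `S` if and only if each `eᵢ M`
is `eᵢ N`-injective (resp. `eᵢ N`-projective) over `Rᵢ`, and the hypotheses on `R₁` and `R₂`
turn one condition into the other on each summand.
-/

/-- `A` is a direct factor of `S`: `incl` identifies `A` with `e S = S e` for the central
idempotent `e = incl 1`, and `proj` is the ring projection onto it. -/
class DirectFactor (S A : Type u) [Ring S] [Ring A] where
  incl : A →ₙ+* S
  proj : S →+* A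
  proj_incl (a : A) : proj (incl a) = a
  incl_proj_eq_mul_left (s : S) : incl (proj s) = incl 1 * s
  incl_proj_eq_mul_right (s : S) : incl (proj s) = s * incl 1

namespace DirectFactor

variable {S A : Type u} [Ring S] [Ring A] [DirectFactor S A]

variable (S A) in
def idem : S := incl (1 : A)

lemma idem_mul_incl (a : A) : idem S A * incl a = incl a := by
  rw [idem, ← incl_proj_eq_mul_left, proj_incl]

lemma idem_mul_comm (s : S) : idem S A * s = s * idem S A := by
  rw [idem, ← incl_proj_eq_mul_left, incl_proj_eq_mul_right]

section Piece

variable (S A) (M : Type u) [AddCommGroup M] [Module S M]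

/-- The summand `e M` of `M`, an `A`-module through `incl`. -/
def piece : Submodule S M where
  carrier := {m | idem S A • m = m}
  add_mem' {m n} (hm : _ = m) (hn : _ = n) := by
    show idem S A • (m + n) = m + n
    rw [smul_add, hm, hn]
  zero_mem' := smul_zero _
  smul_mem' s m (hm : _ = m) := by
    show idem S A • s • m = s • m
    rw [← mul_smul, idem_mul_comm, mul_smul, hm]

variable {S A M}

lemma idem_smul_of_mem_piece {m : M} (hm : m ∈ piece S A M) : idem S A • m = m := hm

lemma incl_smul_mem_piece (a : A) (m : M) : (incl a : S) • m ∈ piece S A M := by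
  show idem S A • incl a • m = incl a • m
  rw [← mul_smul, idem_mul_incl]

instance : Module A (piece S A M) where
  smul a x := ⟨(incl a : S) • (x : M), incl_smul_mem_piece a (x : M)⟩
  one_smul x := Subtype.ext x.2
  mul_smul a b x := Subtype.ext (by
    show incl (a * b) • (x : M) = incl a • incl b • (x : M)
    rw [map_mul, mul_smul])
  smul_zero a := Subtype.ext (smul_zero (incl a : S))
  smul_add a x y := Subtype.ext (smul_add (incl a : S) (x : M) y)
  add_smul a b x := Subtype.ext (by
    show incl (a + b) • (x : M) = incl a • (x : M) + incl b • (x : M)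
    rw [map_add, add_smul])
  zero_smul x := Subtype.ext (by
    show incl (0 : A) • (x : M) = 0
    rw [map_zero, zero_smul])

lemma smul_piece_def (a : A) (x : piece S A M) : a • x = (incl a : S) • x := rfl

lemma proj_smul_piece (s : S) (x : piece S A M) : (proj s : A) • x = s • x := by
  rw [smul_piece_def, incl_proj_eq_mul_right, mul_smul, Subtype.ext_iff]
  exact congrArg (s • ·) x.2

variable (S A M) in
def toPiece : M →ₗ[S] piece S A M where
  toFun m := ⟨idem S A • m, by simpa [idem] using incl_smul_mem_piece (1 : A) m⟩
  map_add' m n := Subtype.ext (smul_add _ m n)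
  map_smul' s m := Subtype.ext (by
    show idem S A • s • m = s • idem S A • m
    rw [← mul_smul, idem_mul_comm, mul_smul])

@[simp] lemma coe_toPiece (m : M) : (toPiece S A M m : M) = idem S A • m := rfl

lemma toPiece_coe (x : piece S A M) : toPiece S A M x = x := Subtype.ext x.2

end Piece

section Transfer

variable {S A B : Type u} [Ring S] [Ring A] [Ring B] [DirectFactor S A] [DirectFactor S B]
variable {M N : Type u} [AddCommGroup M] [Module S M] [AddCommGroup N] [Module S N]

lemma toPiece_add_toPiece (hc : idem S A + idem S B = 1) (m : M) :
    (toPiece S A M m : M) + toPiece S B M m = m := by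
  rw [coe_toPiece, coe_toPiece, ← add_smul, hc, one_smul]

variable (A) in
def pieceMap (g : M →ₗ[S] N) : piece S A M →ₗ[A] piece S A N where
  toFun x := ⟨g x, by
    show idem S A • g x = g x
    rw [← map_smul, idem_smul_of_mem_piece x.2]⟩
  map_add' x y := Subtype.ext (map_add g (x : M) y)
  map_smul' a x := Subtype.ext (map_smul g (incl a : S) (x : M))

@[simp] lemma coe_pieceMap (g : M →ₗ[S] N) (x : piece S A M) :
    (pieceMap A g x : N) = g x := rfl

lemma pieceMap_surjective {g : M →ₗ[S] N} (hg : Function.Surjective g) :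
    Function.Surjective (pieceMap A g) := by
  intro y
  obtain ⟨m, hm⟩ := hg y
  refine ⟨toPiece S A M m, Subtype.ext ?_⟩
  rw [coe_pieceMap, coe_toPiece, map_smul, hm, idem_smul_of_mem_piece y.2]

def compToPiece {K : Type u} [AddCommGroup K] [Module S K] [Module A K]
    (hK : ∀ (s : S) (k : K), (proj s : A) • k = s • k) (g : piece S A N →ₗ[A] K) :
    N →ₗ[S] K where
  toFun n := g (toPiece S A N n)
  map_add' m n := by rw [map_add, map_add]
  map_smul' s n := by rw [map_smul, ← proj_smul_piece, map_smul, hK, RingHom.id_apply]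

lemma compToPiece_apply {K : Type u} [AddCommGroup K] [Module S K] [Module A K]
    (hK : ∀ (s : S) (k : K), (proj s : A) • k = s • k) (g : piece S A N →ₗ[A] K) (n : N) :
    compToPiece hK g n = g (toPiece S A N n) := rfl

def ofPieceMap (h : piece S A M →ₗ[A] piece S A N) : M →ₗ[S] N :=
  (piece S A N).subtype ∘ₗ compToPiece proj_smul_piece h

lemma ofPieceMap_apply (h : piece S A M →ₗ[A] piece S A N) (m : M) :
    ofPieceMap h m = h (toPiece S A M m) := rfl

def ambient (K : Submodule A (piece S A N)) : Submodule S N where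
  carrier := {n | ∃ hn : n ∈ piece S A N, ⟨n, hn⟩ ∈ K}
  add_mem' := fun ⟨hm, hmK⟩ ⟨hn, hnK⟩ => ⟨add_mem hm hn, K.add_mem hmK hnK⟩
  zero_mem' := ⟨zero_mem _, K.zero_mem⟩
  smul_mem' s n := fun ⟨hn, hnK⟩ => ⟨Submodule.smul_mem _ s hn, by
    have := K.smul_mem (proj s) hnK
    rwa [proj_smul_piece] at this⟩

def ofAmbient {K : Submodule A (piece S A N)} (k : ambient K) : K := ⟨⟨k, k.2.fst⟩, k.2.snd⟩

def ambientMap {K : Submodule A (piece S A N)} (f : K →ₗ[A] piece S A M) :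
    ambient K →ₗ[S] M where
  toFun k := f (ofAmbient k)
  map_add' k l := by rw [← Submodule.coe_add, ← map_add]; rfl
  map_smul' s k := by
    have : ofAmbient (s • k) = (proj s : A) • ofAmbient k :=
      Subtype.ext (proj_smul_piece s (ofAmbient k : piece S A N)).symm
    rw [this, map_smul, proj_smul_piece]; rfl

theorem modInj_piece (h : ModInj S M N) : ModInj A (piece S A M) (piece S A N) := by
  intro K f
  obtain ⟨g, hg⟩ := h (ambient K) (ambientMap f)
  exact ⟨pieceMap A g, fun x => Subtype.ext (hg ⟨x, x.1.2, x.2⟩)⟩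

variable (A) in
def pieceSubmodule (K : Submodule S N) : Submodule A (piece S A N) where
  carrier := {x | (x : N) ∈ K}
  add_mem' := K.add_mem
  zero_mem' := K.zero_mem
  smul_mem' a _ hx := K.smul_mem (incl a : S) hx

variable (A) in
def pieceRestrict {K : Submodule S N} (f : K →ₗ[S] M) :
    pieceSubmodule A K →ₗ[A] piece S A M where
  toFun x := ⟨f ⟨x, x.2⟩, by
    show idem S A • f _ = f _
    rw [← map_smul]
    exact congrArg f (Subtype.ext (idem_smul_of_mem_piece x.1.2))⟩
  map_add' x y := Subtype.ext (map_add f ⟨x, x.2⟩ ⟨y, y.2⟩)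
  map_smul' a x := Subtype.ext (map_smul f (incl a : S) ⟨x, x.2⟩)

theorem modInj_of_pieces (hc : idem S A + idem S B = 1)
    (hA : ModInj A (piece S A M) (piece S A N)) (hB : ModInj B (piece S B M) (piece S B N)) :
    ModInj S M N := by
  intro K f
  obtain ⟨gA, hgA⟩ := hA (pieceSubmodule A K) (pieceRestrict A f)
  obtain ⟨gB, hgB⟩ := hB (pieceSubmodule B K) (pieceRestrict B f)
  refine ⟨ofPieceMap gA + ofPieceMap gB, fun k => ?_⟩
  have hkA : toPiece S A N k ∈ pieceSubmodule A K := K.smul_mem _ k.2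
  have hkB : toPiece S B N k ∈ pieceSubmodule B K := K.smul_mem _ k.2
  rw [LinearMap.add_apply, ofPieceMap_apply, ofPieceMap_apply, hgA ⟨_, hkA⟩, hgB ⟨_, hkB⟩]
  show f ⟨_, hkA⟩ + f ⟨_, hkB⟩ = f k
  rw [← map_add]
  exact congrArg f (Subtype.ext (toPiece_add_toPiece hc (k : N)))

theorem modProj_piece (h : ModProj S M N) : ModProj A (piece S A M) (piece S A N) := by
  intro K _ _ g hg f
  let _ : Module S K := Module.compHom K (proj : S →+* A)
  have hK : ∀ (s : S) (k : K), (proj s : A) • k = s • k := fun _ _ => rfl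
  have hg' : Function.Surjective (compToPiece hK g) := fun k =>
    let ⟨x, hx⟩ := hg k
    ⟨x, by rw [compToPiece_apply, toPiece_coe, hx]⟩
  obtain ⟨l, hl⟩ := h K (compToPiece hK g) hg' (compToPiece hK f)
  refine ⟨pieceMap A l, fun x => ?_⟩
  calc g (pieceMap A l x) = g (toPiece S A N (l x)) := by
        rw [← toPiece_coe (pieceMap A l x)]; rfl
    _ = f (toPiece S A M x) := hl x
    _ = f x := by rw [toPiece_coe]

theorem modProj_of_pieces (hc : idem S A + idem S B = 1)
    (hA : ModProj A (piece S A M) (piece S A N)) (hB : ModProj B (piece S B M) (piece S B N)) :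
    ModProj S M N := by
  intro K _ _ g hg f
  obtain ⟨lA, hlA⟩ := hA _ (pieceMap A g) (pieceMap_surjective hg) (pieceMap A f)
  obtain ⟨lB, hlB⟩ := hB _ (pieceMap B g) (pieceMap_surjective hg) (pieceMap B f)
  refine ⟨ofPieceMap lA + ofPieceMap lB, fun m => ?_⟩
  have hA' : g (lA (toPiece S A M m)) = f (toPiece S A M m) := congrArg Subtype.val (hlA _)
  have hB' : g (lB (toPiece S B M m)) = f (toPiece S B M m) := congrArg Subtype.val (hlB _)
  rw [LinearMap.add_apply, ofPieceMap_apply, ofPieceMap_apply, map_add, hA', hB', ← map_add,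
    toPiece_add_toPiece hc]

theorem modInj_iff_modProj_of_factors (hc : idem S A + idem S B = 1)
    (hA : ∀ (P Q : Type u) [AddCommGroup P] [Module A P] [AddCommGroup Q] [Module A Q],
      ModInj A P Q ↔ ModProj A P Q)
    (hB : ∀ (P Q : Type u) [AddCommGroup P] [Module B P] [AddCommGroup Q] [Module B Q],
      ModInj B P Q ↔ ModProj B P Q) :
    ModInj S M N ↔ ModProj S M N :=
  ⟨fun h => modProj_of_pieces hc ((hA _ _).mp (modInj_piece h)) ((hB _ _).mp (modInj_piece h)),
    fun h => modInj_of_pieces hc ((hA _ _).mpr (modProj_piece h)) ((hB _ _).mpr (modProj_piece h))⟩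

end Transfer

section Products

open MulOpposite

variable {S A B : Type u} [Ring S] [Ring A] [Ring B]

instance prodFst : DirectFactor (A × B) A where
  incl := (NonUnitalRingHom.id A).prod 0
  proj := RingHom.fst A B
  proj_incl _ := rfl
  incl_proj_eq_mul_left _ := by ext <;> simp
  incl_proj_eq_mul_right _ := by ext <;> simp

instance prodSnd : DirectFactor (A × B) B where
  incl := (0 : B →ₙ+* A).prod (NonUnitalRingHom.id B)
  proj := RingHom.snd A B
  proj_incl _ := rfl
  incl_proj_eq_mul_left _ := by ext <;> simp
  incl_proj_eq_mul_right _ := by ext <;> simp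

lemma idem_prodFst_add_idem_prodSnd : idem (A × B) A + idem (A × B) B = 1 := by
  ext <;> simp [idem, DirectFactor.incl]

instance mulOpposite [DirectFactor S A] : DirectFactor Sᵐᵒᵖ Aᵐᵒᵖ where
  incl := NonUnitalRingHom.op incl
  proj := RingHom.op proj
  proj_incl a := unop_injective (proj_incl a.unop)
  incl_proj_eq_mul_left s := unop_injective (incl_proj_eq_mul_right s.unop)
  incl_proj_eq_mul_right s := unop_injective (incl_proj_eq_mul_left s.unop)

lemma idem_op [DirectFactor S A] : idem Sᵐᵒᵖ Aᵐᵒᵖ = op (idem S A) := rfl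

end Products

end DirectFactor

/-- the product of two right super QF rings is right super QF. -/
theorem stmt_16 (R₁ R₂ : Type u) [Ring R₁] [Ring R₂]
    (h₁ : RightSuperQF R₁) (h₂ : RightSuperQF R₂) : RightSuperQF (R₁ × R₂) := by
  intro M N _ _ _ _
  refine DirectFactor.modInj_iff_modProj_of_factors (A := R₁ᵐᵒᵖ) (B := R₂ᵐᵒᵖ) ?_ h₁ h₂
  rw [DirectFactor.idem_op, DirectFactor.idem_op, ← MulOpposite.op_add,
    DirectFactor.idem_prodFst_add_idem_prodSnd, MulOpposite.op_one]
end
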